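/- arXiv:1802.02746 — 6 statements merged into one kernel-verified Lean document; each statement's English description precedes it below -/
import Mathlib

section
/- Let Â be a nonsingular (k+1)×(k+1) real matrix, let ρ ≥ 1, and let B be the k×k matrix obtained from Â by removing row i and column j. Then |det(B')| ≤ ρ·|det(B)| for every k×k submatrix B' of Â (i.e., B has global ρ-maximum volume in Â) if and only if ρ·|(Â⁻¹)_{j,i}| ≥ ‖Â⁻¹‖_C. -/
open Matrix

/-- The maximum absolute entry norm `‖·‖_C` of a matrix. -/
noncomputable def cnorm {m n : Type*} [Fintype m] [Fintype n]
    (M : Matrix m n ℝ) : ℝ := ⨆ i, ⨆ j, |M i j|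

/-- Every injective map `Fin k → Fin (k+1)` is `i.succAbove ∘ σ` for some `i` and perm `σ`. -/
lemma inj_eq_succAbove_comp {k : ℕ} (r : Fin k → Fin (k + 1)) (hr : Function.Injective r) :
    ∃ (i : Fin (k + 1)) (σ : Equiv.Perm (Fin k)), r = i.succAbove ∘ σ := by
  have hns : ¬ Function.Surjective r := by
    intro hs
    have := Fintype.card_le_of_surjective r hs
    simp at this
  rw [Function.Surjective] at hns
  push_neg at hns
  obtain ⟨i, hi⟩ := hns
  have hex : ∀ x, ∃ z, i.succAbove z = r x := fun x =>
    Fin.exists_succAbove_eq (fun h => hi x h)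
  choose σ hσ using hex
  have hσinj : Function.Injective σ := fun a b h => by
    apply hr; rw [← hσ a, ← hσ b, h]
  refine ⟨i, Equiv.ofBijective σ (Finite.injective_iff_bijective.mp hσinj), ?_⟩
  funext x
  simp [Equiv.ofBijective, hσ x]

/-- Cofactor formula for the absolute value. -/
lemma abs_det_submatrix_succAbove {k : ℕ} (A : Matrix (Fin (k + 1)) (Fin (k + 1)) ℝ)
    (hA : IsUnit A.det) (i j : Fin (k + 1)) :
    |(A.submatrix i.succAbove j.succAbove).det| = |A⁻¹ j i| * |A.det| := by
  have h1 : A⁻¹ j i = (A.det)⁻¹ * A.adjugate j i := by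
    rw [Matrix.inv_def]; simp [Ring.inverse_eq_inv]
  rw [h1, Matrix.adjugate_fin_succ_eq_det_submatrix]
  have hd : A.det ≠ 0 := by
    intro h; rw [h] at hA; simp at hA
  rw [abs_mul, abs_mul, abs_inv, abs_pow, abs_neg, abs_one, one_pow, one_mul]
  field_simp

/-- Let `Ahat` be a nonsingular `(k+1) × (k+1)` real matrix, `ρ ≥ 1`, and let `B` be the
`k × k` matrix obtained from `Ahat` by removing row `i` and column `j`.  Then `B` has global
`ρ`-maximum volume in `Ahat` (i.e. `|det B'| ≤ ρ * |det B|` for every `k × k` submatrix `B'`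
of `Ahat`) if and only if `ρ * |(Ahat⁻¹)_{j,i}| ≥ ‖Ahat⁻¹‖_C`. -/
theorem row_col_remove_maxvol_iff {k : ℕ} (Ahat : Matrix (Fin (k + 1)) (Fin (k + 1)) ℝ)
    (hA : IsUnit Ahat.det) (ρ : ℝ) (hρ : 1 ≤ ρ) (i j : Fin (k + 1)) :
    (∀ (r c : Fin k → Fin (k + 1)), Function.Injective r → Function.Injective c →
        |(Ahat.submatrix r c).det| ≤ ρ * |(Ahat.submatrix i.succAbove j.succAbove).det|) ↔
      ρ * |Ahat⁻¹ j i| ≥ cnorm Ahat⁻¹ := by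
  have hd : (0:ℝ) < |Ahat.det| := by
    rcases eq_or_ne Ahat.det 0 with h | h
    · rw [h] at hA; simp at hA
    · exact abs_pos.mpr h
  constructor
  · intro H
    rw [ge_iff_le, cnorm]
    refine ciSup_le fun j' => ciSup_le fun i' => ?_
    have := H i'.succAbove j'.succAbove Fin.succAbove_right_injective
      Fin.succAbove_right_injective
    rw [abs_det_submatrix_succAbove Ahat hA, abs_det_submatrix_succAbove Ahat hA] at this
    rw [← mul_assoc] at this
    exact le_of_mul_le_mul_right this hd
  · intro H r c hr hc
    obtain ⟨i', σ, rfl⟩ := inj_eq_succAbove_comp r hr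
    obtain ⟨j', τ, rfl⟩ := inj_eq_succAbove_comp c hc
    have hsub : Ahat.submatrix (i'.succAbove ∘ σ) (j'.succAbove ∘ τ) =
        ((Ahat.submatrix i'.succAbove j'.succAbove).submatrix σ id).submatrix id τ := by
      ext a b; simp
    rw [hsub, Matrix.det_permute', Matrix.det_permute, abs_mul, abs_mul]
    have hsign : ∀ (π : Equiv.Perm (Fin k)), |((Equiv.Perm.sign π : ℤ) : ℝ)| = 1 := by
      intro π
      rcases Int.units_eq_one_or (Equiv.Perm.sign π) with h | h <;> simp [h]
    rw [hsign, hsign, one_mul, one_mul]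
    rw [abs_det_submatrix_succAbove Ahat hA, abs_det_submatrix_succAbove Ahat hA]
    rw [show ρ * (|Ahat⁻¹ j i| * |Ahat.det|) = (ρ * |Ahat⁻¹ j i|) * |Ahat.det| by ring]
    refine mul_le_mul_of_nonneg_right (le_trans ?_ H) hd.le
    rw [cnorm]
    have hb : ∀ (f : Fin (k+1) → ℝ), BddAbove (Set.range f) := fun f => Set.Finite.bddAbove
      (Set.finite_range f)
    exact le_trans (le_ciSup (f := fun i'' => |Ahat⁻¹ j' i''|) (hb _) i') (le_ciSup (hb fun j'' => ⨆ i'', |Ahat⁻¹ j'' i''|) j')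
end

section
/- Let A₁₁ be a nonsingular k×k real matrix, b, c ∈ ℝ^k, α ∈ ℝ, and set Â = [[A₁₁, b],[cᵀ, α]] (a (k+1)×(k+1) matrix). Let γ = α − cᵀA₁₁⁻¹b be the Schur complement of A₁₁ in Â, and let A₁₁'' be the leading k×k block of the matrix obtained from Â by interchanging column k+1 with column j (1 ≤ j ≤ k) and row k+1 with row i (1 ≤ i ≤ k). Then |det(A₁₁'')| = |det(A₁₁)| · |γ·(A₁₁⁻¹)_{j,i} + (A₁₁⁻¹b)_j·(A₁₁⁻ᵀc)_i|, where A₁₁⁻ᵀ denotes the transpose of the inverse of A₁₁. -/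
open Matrix

/-- **Row and column exchange formula.**
Let `A₁₁` be a nonsingular `k × k` real matrix, `b, c ∈ ℝ^k`, `α ∈ ℝ`, and let
`Ahat = [[A₁₁, b], [cᵀ, α]]` (a `(k+1) × (k+1)` matrix).  Let `γ = α − cᵀ A₁₁⁻¹ b` be the
Schur complement of `A₁₁` in `Ahat`, and let `A₁₁''` be the leading `k × k` block of the
matrix obtained from `Ahat` by interchanging column `k+1` with column `j` and row `k+1`
with row `i` (`1 ≤ i, j ≤ k`).  Then
`|det A₁₁''| = |det A₁₁| * |γ (A₁₁⁻¹)_{j,i} + (A₁₁⁻¹ b)_j (A₁₁⁻ᵀ c)_i|`. -/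
theorem row_col_exchange_volume {k : ℕ} (A₁₁ : Matrix (Fin k) (Fin k) ℝ)
    (hA : IsUnit A₁₁.det) (b c : Fin k → ℝ) (α : ℝ) (i j : Fin k)
    (Ahat : Matrix (Fin (k + 1)) (Fin (k + 1)) ℝ)
    (hAhat : Ahat = Matrix.of
      (Fin.snoc (fun i' : Fin k => Fin.snoc (A₁₁ i') (b i')) (Fin.snoc c α)))
    (A₁₁'' : Matrix (Fin k) (Fin k) ℝ)
    (hA'' : A₁₁'' = (Ahat.submatrix
        (Equiv.swap (Fin.last k) i.castSucc) (Equiv.swap (Fin.last k) j.castSucc)).submatrix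
        Fin.castSucc Fin.castSucc) :
    |A₁₁''.det| = |A₁₁.det| *
      |(α - c ⬝ᵥ A₁₁⁻¹ *ᵥ b) * A₁₁⁻¹ j i + (A₁₁⁻¹ *ᵥ b) j * ((A₁₁⁻¹)ᵀ *ᵥ c) i| := by
  set P := A₁₁⁻¹ with hP
  have h1 : A₁₁ * P = 1 := Matrix.mul_nonsing_inv _ hA
  have h2 : P * A₁₁ = 1 := Matrix.nonsing_inv_mul _ hA
  set g : Fin k → ℝ := P *ᵥ b with hg
  set b' : Fin k → ℝ := fun p => if p = i then α else b p with hb'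
  set x : Fin k → ℝ := fun p => P p i with hx
  set y : Fin k → ℝ := c - A₁₁ i with hy
  set z : Fin k → ℝ :=
    g + (α - b i) • x - Pi.single j 1 - (c j - A₁₁ i j) • x with hz
  set U : Matrix (Fin k) (Fin 2) ℝ := Matrix.of fun p t => ![x, z] t p with hU
  set V : Matrix (Fin 2) (Fin k) ℝ := Matrix.of fun t q => ![y, Pi.single j 1] t q with hV
  -- Step 1: identify A₁₁'' as a row and column update of A₁₁
  have hA2 : A₁₁'' = (A₁₁.updateRow i c).updateCol j b' := by
    subst hAhat; subst hA''
    ext p q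
    have hswapr : ∀ (p i : Fin k), p ≠ i →
        Equiv.swap (Fin.last k) i.castSucc p.castSucc = p.castSucc := by
      intro p i h
      exact Equiv.swap_apply_of_ne_of_ne (Fin.castSucc_lt_last p).ne
        (by simpa [Fin.castSucc_inj] using h)
    by_cases hp : p = i <;> by_cases hq : q = j
    · subst hp; subst hq
      simp [Matrix.submatrix_apply, Equiv.swap_apply_right,
        Matrix.updateCol_apply, hb']
    · subst hp
      simp [Matrix.submatrix_apply, Equiv.swap_apply_right, hswapr q j hq,
        Matrix.updateCol_apply, Matrix.updateRow_apply, hq, hb']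
    · subst hq
      simp [Matrix.submatrix_apply, Equiv.swap_apply_right, hswapr p i hp,
        Matrix.updateCol_apply, Matrix.updateRow_apply, hp, hb']
    · simp [Matrix.submatrix_apply, hswapr p i hp, hswapr q j hq,
        Matrix.updateCol_apply, Matrix.updateRow_apply, hp, hq, hb']
  -- entries of U * V
  have hUV : ∀ p q, (U * V) p q = x p * y q + z p * (Pi.single j 1 : Fin k → ℝ) q := by
    intro p q
    rw [Matrix.mul_apply, Fin.sum_univ_two]
    simp [hU, hV]
  -- Step 2: P * A₁₁'' = 1 + U * V
  have hE : P * A₁₁'' = 1 + U * V := by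
    rw [hA2]
    ext p q
    rw [Matrix.mul_apply, Matrix.add_apply, hUV]
    by_cases hq : q = j
    · subst hq
      have e1 : ∑ r, P p r * (A₁₁.updateRow i c).updateCol q b' r q
          = ∑ r, (P p r * b r + if r = i then P p i * (α - b i) else 0) := by
        refine Finset.sum_congr rfl fun r _ => ?_
        by_cases hr : r = i <;>
          simp [Matrix.updateCol_apply, hb', hr] <;> ring
      rw [e1, Finset.sum_add_distrib, Finset.sum_ite_eq' Finset.univ i]
      have e2 : ∑ r, P p r * b r = g p := rfl
      rw [e2]
      simp only [Finset.mem_univ, if_true, hz, hy, Pi.add_apply, Pi.sub_apply,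
        Pi.smul_apply, smul_eq_mul, Matrix.one_apply, Pi.single_apply]
      by_cases hpj : p = q <;> simp [hpj] <;> ring
    · have e1 : ∑ r, P p r * (A₁₁.updateRow i c).updateCol j b' r q
          = ∑ r, (P p r * A₁₁ r q + if r = i then P p i * (c q - A₁₁ i q) else 0) := by
        refine Finset.sum_congr rfl fun r _ => ?_
        by_cases hr : r = i <;>
          simp [Matrix.updateCol_apply, Matrix.updateRow_apply, hq, hr] <;> ring
      rw [e1, Finset.sum_add_distrib, Finset.sum_ite_eq' Finset.univ i]
      have e2 : ∑ r, P p r * A₁₁ r q = (1 : Matrix (Fin k) (Fin k) ℝ) p q := by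
        rw [← h2, Matrix.mul_apply]
      rw [e2]
      simp [hy, hx, Pi.single_apply, hq]
  -- Step 3: determinant factorization
  have hdet : A₁₁''.det = A₁₁.det * (1 + V * U).det := by
    have hfac : A₁₁'' = A₁₁ * (1 + U * V) := by
      rw [← hE, ← Matrix.mul_assoc, h1, one_mul]
    rw [hfac, Matrix.det_mul, Matrix.det_one_add_mul_comm]
  -- Step 4: compute the 2×2 determinant
  have e00 : (V * U) 0 0 = y ⬝ᵥ x := by
    rw [Matrix.mul_apply']; simp [hU, hV, dotProduct]
  have e01 : (V * U) 0 1 = y ⬝ᵥ z := by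
    rw [Matrix.mul_apply']; simp [hU, hV, dotProduct]
  have e10 : (V * U) 1 0 = x j := by
    rw [Matrix.mul_apply']
    simp [hU, hV, dotProduct, Pi.single_apply, Finset.sum_ite_eq']
  have e11 : (V * U) 1 1 = z j := by
    rw [Matrix.mul_apply']
    simp [hU, hV, dotProduct, Pi.single_apply, Finset.sum_ite_eq']
  have hVUdet : (1 + V * U).det = (1 + y ⬝ᵥ x) * (1 + z j) - (y ⬝ᵥ z) * x j := by
    rw [Matrix.det_fin_two]
    simp [Matrix.add_apply, Matrix.one_apply, e00, e01, e10, e11]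
  -- scalar identities
  have hAx : A₁₁ i ⬝ᵥ x = 1 := by
    have := congrArg (fun M => M i i) h1
    simpa [Matrix.mul_apply, dotProduct, hx] using this
  have hAg : A₁₁ i ⬝ᵥ g = b i := by
    have hg' : A₁₁ *ᵥ g = b := by
      rw [hg, Matrix.mulVec_mulVec, h1, Matrix.one_mulVec]
    have := congrFun hg' i
    simpa [Matrix.mulVec, dotProduct] using this
  have hyx : y ⬝ᵥ x = c ⬝ᵥ x - 1 := by
    rw [hy, sub_dotProduct, hAx]
  have hyg : y ⬝ᵥ g = c ⬝ᵥ g - b i := by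
    rw [hy, sub_dotProduct, hAg]
  have hyz : y ⬝ᵥ z = (c ⬝ᵥ g - b i) + (α - b i) * (c ⬝ᵥ x - 1)
      - (c j - A₁₁ i j) - (c j - A₁₁ i j) * (c ⬝ᵥ x - 1) := by
    rw [hz]
    rw [dotProduct_sub, dotProduct_sub, dotProduct_add,
      dotProduct_smul, dotProduct_smul, dotProduct_single,
      hyg, hyx]
    have : y j = c j - A₁₁ i j := by rw [hy]; simp
    rw [this]
    simp only [smul_eq_mul]
    ring
  have hzj : z j = g j + (α - b i) * x j - 1 - (c j - A₁₁ i j) * x j := by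
    rw [hz]; simp [Pi.single_apply]
  -- final assembly
  have hPx : (Pᵀ *ᵥ c) i = c ⬝ᵥ x := by
    simp [Matrix.mulVec, dotProduct, hx, Matrix.transpose_apply, mul_comm]
  have hgj : (P *ᵥ b) j = g j := by rw [hg]
  have hcg : c ⬝ᵥ (P *ᵥ b) = c ⬝ᵥ g := by rw [hg]
  have hmain : A₁₁''.det
      = A₁₁.det * ((α - c ⬝ᵥ P *ᵥ b) * P j i + (P *ᵥ b) j * (Pᵀ *ᵥ c) i) := by
    rw [hdet, hVUdet, hyx, hyz, hzj, hPx, hgj, hcg]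
    have hxj : P j i = x j := by rw [hx]
    rw [hxj]
    ring
  rw [hmain, abs_mul]
end

section
/- Let A be an m×n real matrix partitioned as A = [[A₁₁, A₁₂],[A₂₁, A₂₂]] with A₁₁ a nonsingular k×k block, k < min(m,n), and let ρ ≥ 1, β > 0. If ‖A₁₁⁻¹A₁₂‖_C ≤ ρ, ‖A₂₁A₁₁⁻¹‖_C ≤ ρ, ‖A/A₁₁‖_C ≤ ρβ, and ‖A₁₁⁻¹‖_C ≤ ρβ⁻¹, then A₁₁ has local (2ρ²)-maximum volume in A. -/
/-!
The `k × k` minors of the bordered matrix `M = [[A, b], [c, d]]` are, up to sign, the entries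
of `adj M`. Writing `s = d - c A⁻¹ b` for the Schur complement, `M` factors as
`[[A, 0], [c, 1]] · [[1, 0], [0, s]] · [[1, A⁻¹ b], [0, 1]]`, and `adj (X Y) = adj Y · adj X` gives
`adj M = det A · [[s A⁻¹ + (A⁻¹ b)(c A⁻¹), -A⁻¹ b], [-c A⁻¹, 1]]`, valid also when `s = 0`.
The hypotheses bound the entries of these blocks by `ρ β · ρ β⁻¹ + ρ² ≤ 2ρ²`, `ρ`, `ρ` and `1`.
-/

open Matrix

open Function

theorem Function.Injective.exists_equiv_comp_inl_eq {n : Type*} [Fintype n]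
    {f : n → n ⊕ Unit} (hf : Injective f) : ∃ e : n ⊕ Unit ≃ n ⊕ Unit, e ∘ Sum.inl = f := by
  obtain ⟨a, ha⟩ : ∃ a, a ∉ Set.range f := by
    by_contra! h
    simpa using Fintype.card_le_of_surjective f h
  refine ⟨Equiv.ofBijective (Sum.elim f fun _ => a) (Finite.injective_iff_bijective.mp ?_), rfl⟩
  rintro (x | ⟨⟩) (y | ⟨⟩) h
  · exact congrArg Sum.inl (hf h)
  · exact absurd ⟨x, h⟩ ha
  · exact absurd ⟨y, h.symm⟩ ha
  · rfl

namespace Matrix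

variable {R m n : Type*} [CommRing R] [Fintype m] [Fintype n] [DecidableEq m] [DecidableEq n]

theorem adjugate_eq_det_smul_of_mul_eq_one {A B : Matrix n n R} (h : A * B = 1) :
    adjugate A = A.det • B := by
  rw [← Matrix.mul_one (adjugate A), ← h, ← Matrix.mul_assoc, adjugate_mul, smul_mul,
    Matrix.one_mul]

theorem adjugate_fromBlocks_one₁₁_zero₂₁_one₂₂ (B : Matrix n m R) :
    adjugate (fromBlocks 1 B 0 1) = fromBlocks 1 (-B) 0 1 := by
  rw [adjugate_eq_det_smul_of_mul_eq_one (B := fromBlocks 1 (-B) 0 1), det_fromBlocks_zero₂₁,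
    det_one, det_one, one_mul, one_smul]
  simp [fromBlocks_multiply, fromBlocks_one]

theorem adjugate_fromBlocks_zero₁₂_one₂₂ (A : Matrix n n R) (C : Matrix m n R)
    (hA : IsUnit A.det) :
    adjugate (fromBlocks A 0 C 1) = A.det • fromBlocks A⁻¹ 0 (-(C * A⁻¹)) 1 := by
  rw [adjugate_eq_det_smul_of_mul_eq_one (B := fromBlocks A⁻¹ 0 (-(C * A⁻¹)) 1),
    det_fromBlocks_zero₁₂, det_one, mul_one]
  simp [fromBlocks_multiply, fromBlocks_one, mul_nonsing_inv A hA]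

theorem adjugate_fromBlocks_one₁₁_zero₁₂_zero₂₁ (S : Matrix Unit Unit R) :
    adjugate (fromBlocks (1 : Matrix n n R) 0 0 S) = fromBlocks (S () () • 1) 0 0 1 := by
  set s := S () ()
  have hS : S = diagonal fun _ => s := by ext ⟨⟩ ⟨⟩; rfl
  rw [hS, ← diagonal_one, fromBlocks_diagonal, adjugate_diagonal, ← diagonal_one,
    ← diagonal_smul, fromBlocks_diagonal]
  congr 1
  ext (i | u)
  · rw [Finset.prod_erase Finset.univ (by rfl)]
    simp [Fintype.prod_sum_type]
  · refine Finset.prod_eq_one ?_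
    rintro (j | ⟨⟩) hj
    · rfl
    · simp at hj

theorem fromBlocks_eq_mul_schur_mul (A : Matrix n n R) (B : Matrix n m R)
    (C : Matrix m n R) (D : Matrix m m R) (hA : IsUnit A.det) :
    fromBlocks A B C D =
      fromBlocks A 0 C 1 * fromBlocks 1 0 0 (D - C * A⁻¹ * B) * fromBlocks 1 (A⁻¹ * B) 0 1 := by
  simp [fromBlocks_multiply, ← Matrix.mul_assoc, mul_nonsing_inv A hA]

theorem adjugate_fromBlocks_unit (A : Matrix n n R) (b : Matrix n Unit R)
    (c : Matrix Unit n R) (d : Matrix Unit Unit R) (hA : IsUnit A.det) :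
    adjugate (fromBlocks A b c d) = A.det • fromBlocks
      ((d - c * A⁻¹ * b) () () • A⁻¹ + A⁻¹ * b * (c * A⁻¹)) (-(A⁻¹ * b)) (-(c * A⁻¹)) 1 := by
  rw [fromBlocks_eq_mul_schur_mul A b c d hA, adjugate_mul_distrib, adjugate_mul_distrib,
    adjugate_fromBlocks_one₁₁_zero₂₁_one₂₂, adjugate_fromBlocks_one₁₁_zero₁₂_zero₂₁,
    adjugate_fromBlocks_zero₁₂_one₂₂ A c hA, mul_smul_comm]
  simp [fromBlocks_multiply, Matrix.mul_assoc]

theorem exists_abs_det_submatrix_eq_abs_adjugate [LinearOrder R] [IsStrictOrderedRing R]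
    (M : Matrix (n ⊕ Unit) (n ⊕ Unit) R) {r c : n → n ⊕ Unit} (hr : Injective r)
    (hc : Injective c) : ∃ i j, |(M.submatrix r c).det| = |adjugate M i j| := by
  obtain ⟨eR, rfl⟩ := hr.exists_equiv_comp_inl_eq
  obtain ⟨eC, rfl⟩ := hc.exists_equiv_comp_inl_eq
  refine ⟨eC (Sum.inr ()), eR (Sum.inr ()), ?_⟩
  have hblock : (M.updateRow (eR (Sum.inr ())) (Pi.single (eC (Sum.inr ())) 1)).submatrix eR eC =
      fromBlocks (M.submatrix (eR ∘ Sum.inl) (eC ∘ Sum.inl))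
        (of fun x _ => M (eR (Sum.inl x)) (eC (Sum.inr ()))) 0 1 := by
    ext (x | ⟨⟩) (y | ⟨⟩) <;> simp [updateRow_apply]
  rw [adjugate_apply, ← abs_det_submatrix_equiv_equiv eR eC, hblock, det_fromBlocks_zero₂₁,
    det_one, mul_one]

end Matrix

section cnorm

variable {m n m' n' : Type*} [Fintype m] [Fintype n] [Fintype m'] [Fintype n']

theorem abs_le_cnorm (M : Matrix m n ℝ) (i : m) (j : n) : |M i j| ≤ cnorm M :=
  (le_ciSup (Set.finite_range _).bddAbove j).trans
    (le_ciSup (f := fun i => ⨆ j, |M i j|) (Set.finite_range _).bddAbove i)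

theorem cnorm_nonneg (M : Matrix m n ℝ) : 0 ≤ cnorm M :=
  Real.iSup_nonneg fun _ => Real.iSup_nonneg fun _ => abs_nonneg _

theorem cnorm_submatrix_le (M : Matrix m n ℝ) (f : m' → m) (g : n' → n) :
    cnorm (M.submatrix f g) ≤ cnorm M :=
  Real.iSup_le (fun i => Real.iSup_le (fun j => abs_le_cnorm M (f i) (g j)) (cnorm_nonneg M))
    (cnorm_nonneg M)

end cnorm

theorem abs_adjugate_fromBlocks_unit_le {n : Type*} [Fintype n] [DecidableEq n]
    (A : Matrix n n ℝ) (b : Matrix n Unit ℝ) (c : Matrix Unit n ℝ) (d : Matrix Unit Unit ℝ)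
    (hA : IsUnit A.det) {ρ β : ℝ} (hρ : 1 ≤ ρ) (h₁ : cnorm (A⁻¹ * b) ≤ ρ)
    (h₂ : cnorm (c * A⁻¹) ≤ ρ) (h₃ : cnorm (d - c * A⁻¹ * b) ≤ ρ * β)
    (h₄ : cnorm A⁻¹ ≤ ρ * β⁻¹) (i j : n ⊕ Unit) :
    |adjugate (fromBlocks A b c d) i j| ≤ 2 * ρ ^ 2 * |A.det| := by
  rw [adjugate_fromBlocks_unit A b c d hA, Matrix.smul_apply, smul_eq_mul, abs_mul,
    mul_comm |A.det|]
  refine mul_le_mul_of_nonneg_right ?_ (abs_nonneg _)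
  have hb (x : n) : |(A⁻¹ * b) x ()| ≤ ρ := (abs_le_cnorm _ x ()).trans h₁
  have hc (y : n) : |(c * A⁻¹) () y| ≤ ρ := (abs_le_cnorm _ () y).trans h₂
  rcases i with x | ⟨⟩ <;> rcases j with y | ⟨⟩
  · set s := (d - c * A⁻¹ * b) () ()
    have hs : |s| ≤ ρ * β := (abs_le_cnorm _ () ()).trans h₃
    have ha : |A⁻¹ x y| ≤ ρ * β⁻¹ := (abs_le_cnorm _ x y).trans h₄
    have hbc : (A⁻¹ * b * (c * A⁻¹)) x y = (A⁻¹ * b) x () * (c * A⁻¹) () y := by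
      simp [mul_apply]
    calc |(s • A⁻¹ + A⁻¹ * b * (c * A⁻¹)) x y|
        ≤ |s| * |A⁻¹ x y| + |(A⁻¹ * b) x ()| * |(c * A⁻¹) () y| := by
          rw [Matrix.add_apply, Matrix.smul_apply, smul_eq_mul, hbc, ← abs_mul, ← abs_mul]
          exact abs_add_le _ _
      _ ≤ ρ * β * (ρ * β⁻¹) + ρ * ρ :=
          add_le_add (mul_le_mul hs ha (abs_nonneg _) ((abs_nonneg _).trans hs))
            (mul_le_mul (hb x) (hc y) (abs_nonneg _) (by linarith))
      _ = ρ ^ 2 * (β * β⁻¹) + ρ ^ 2 := by ring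
      _ ≤ 2 * ρ ^ 2 := by nlinarith [mul_inv_le_one (a := β), sq_nonneg ρ]
  · simpa using (hb x).trans (by nlinarith)
  · simpa using (hc y).trans (by nlinarith)
  · simpa using (by nlinarith : (1 : ℝ) ≤ 2 * ρ ^ 2)

theorem local_maxvol_of_bounds_general {k m₂ n₂ : ℕ}
    (A₁₁ : Matrix (Fin k) (Fin k) ℝ) (A₁₂ : Matrix (Fin k) (Fin n₂) ℝ)
    (A₂₁ : Matrix (Fin m₂) (Fin k) ℝ) (A₂₂ : Matrix (Fin m₂) (Fin n₂) ℝ)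
    (hA : IsUnit A₁₁.det) (ρ β : ℝ) (hρ : 1 ≤ ρ)
    (h₁ : cnorm (A₁₁⁻¹ * A₁₂) ≤ ρ)
    (h₂ : cnorm (A₂₁ * A₁₁⁻¹) ≤ ρ)
    (h₃ : cnorm (A₂₂ - A₂₁ * A₁₁⁻¹ * A₁₂) ≤ ρ * β)
    (h₄ : cnorm A₁₁⁻¹ ≤ ρ * β⁻¹) :
    ∀ (p : Fin m₂) (q : Fin n₂) (r c : Fin k → Fin k ⊕ Unit),
      Function.Injective r → Function.Injective c →
      |((Matrix.fromBlocks A₁₁ (Matrix.of fun i _ => A₁₂ i q)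
          (Matrix.of fun _ j => A₂₁ p j) (Matrix.of fun _ _ => A₂₂ p q)).submatrix r c).det|
        ≤ (2 * ρ ^ 2) * |A₁₁.det| := by
  intro p q rows cols hrows hcols
  obtain ⟨i, j, hij⟩ := exists_abs_det_submatrix_eq_abs_adjugate (R := ℝ) _ hrows hcols
  rw [hij]
  set b : Matrix (Fin k) Unit ℝ := of fun i _ => A₁₂ i q
  set c : Matrix Unit (Fin k) ℝ := of fun _ j => A₂₁ p j
  set d : Matrix Unit Unit ℝ := of fun _ _ => A₂₂ p q
  have hb : A₁₁⁻¹ * b = (A₁₁⁻¹ * A₁₂).submatrix id fun _ => q := by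
    ext; simp [b, mul_apply]
  have hc : c * A₁₁⁻¹ = (A₂₁ * A₁₁⁻¹).submatrix (fun _ => p) id := by
    ext; simp [c, mul_apply]
  have hs : d - c * A₁₁⁻¹ * b = (A₂₂ - A₂₁ * A₁₁⁻¹ * A₁₂).submatrix (fun _ => p) fun _ => q := by
    ext; simp [b, c, d, mul_apply]
  refine abs_adjugate_fromBlocks_unit_le A₁₁ b c d hA hρ ?_ ?_ ?_ h₄ i j
  · exact hb ▸ (cnorm_submatrix_le _ _ _).trans h₁
  · exact hc ▸ (cnorm_submatrix_le _ _ _).trans h₂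
  · exact hs ▸ (cnorm_submatrix_le _ _ _).trans h₃

/-- Let `A = [[A₁₁, A₁₂], [A₂₁, A₂₂]]` be an `m × n` real matrix with `A₁₁` a nonsingular
`k × k` block, `k < min(m,n)`, and let `ρ ≥ 1`, `β > 0`.  If `‖A₁₁⁻¹ A₁₂‖_C ≤ ρ`,
`‖A₂₁ A₁₁⁻¹‖_C ≤ ρ`, `‖A/A₁₁‖_C ≤ ρ β` and `‖A₁₁⁻¹‖_C ≤ ρ β⁻¹`, then `A₁₁` has local
`(2ρ²)`-maximum volume in `A`; i.e. for each `(k+1) × (k+1)` submatrix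
`Ahat p q = [[A₁₁, A₁₂ eq], [A₂₁ row p, A₂₂ p q]]` of `A` containing `A₁₁`, every `k × k`
submatrix of `Ahat p q` has absolute determinant at most `2ρ² * |det A₁₁|`. -/
theorem local_maxvol_of_bounds {k m₂ n₂ : ℕ} (hm : 0 < m₂) (hn : 0 < n₂)
    (A₁₁ : Matrix (Fin k) (Fin k) ℝ) (A₁₂ : Matrix (Fin k) (Fin n₂) ℝ)
    (A₂₁ : Matrix (Fin m₂) (Fin k) ℝ) (A₂₂ : Matrix (Fin m₂) (Fin n₂) ℝ)
    (hA : IsUnit A₁₁.det) (ρ β : ℝ) (hρ : 1 ≤ ρ) (hβ : 0 < β)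
    (h₁ : cnorm (A₁₁⁻¹ * A₁₂) ≤ ρ)
    (h₂ : cnorm (A₂₁ * A₁₁⁻¹) ≤ ρ)
    (h₃ : cnorm (A₂₂ - A₂₁ * A₁₁⁻¹ * A₁₂) ≤ ρ * β)
    (h₄ : cnorm A₁₁⁻¹ ≤ ρ * β⁻¹) :
    ∀ (p : Fin m₂) (q : Fin n₂) (r c : Fin k → Fin k ⊕ Unit),
      Function.Injective r → Function.Injective c →
      |((Matrix.fromBlocks A₁₁ (Matrix.of fun i _ => A₁₂ i q)
          (Matrix.of fun _ j => A₂₁ p j) (Matrix.of fun _ _ => A₂₂ p q)).submatrix r c).det|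
        ≤ (2 * ρ ^ 2) * |A₁₁.det| :=
  local_maxvol_of_bounds_general A₁₁ A₁₂ A₂₁ A₂₂ hA ρ β hρ h₁ h₂ h₃ h₄
end

section
/- Let Â = [[A₁₁, b],[cᵀ, α]] be a (k+1)×(k+1) real matrix whose leading k×k block A₁₁ is nonsingular, let ρ ≥ 1, and suppose A₁₁ has global ρ-maximum volume in Â (i.e., ρ·|det(A₁₁)| ≥ |det(B')| for every k×k submatrix B' of Â). Then the Schur complement γ = α − cᵀA₁₁⁻¹b satisfies |γ| ≤ ρ(k+1)·σ_{k+1}(Â). -/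
open Matrix

/-- The `k`-th largest value (1-indexed) of a finite family of reals. -/
noncomputable def kthLargest {ι : Type*} [Fintype ι] (f : ι → ℝ) (k : ℕ) : ℝ :=
  ((Finset.univ.val.map f).sort (· ≤ ·)).getD (Fintype.card ι - k) 0

/-- The `k`-th largest singular value (1-indexed) of a real matrix,
i.e. the square root of the `k`-th largest eigenvalue of `Aᴴ * A`. -/
noncomputable def singularValue {m n : Type*} [Fintype m] [Fintype n] [DecidableEq n]
    (A : Matrix m n ℝ) (k : ℕ) : ℝ :=
  Real.sqrt (kthLargest (Matrix.isHermitian_conjTranspose_mul_self A).eigenvalues k)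

/-!
Every entry of `adjugate Â` is, up to sign, a `k × k` minor of `Â`, hence at most
`ρ |det A₁₁|` in absolute value. Since `adjugate Â * Â = det Â • 1`, this gives
`|det Â| ‖v‖ ≤ (k + 1) ρ |det A₁₁| ‖Â v‖` for every `v`; for `v` a unit eigenvector of `Âᴴ Â`
with smallest eigenvalue, `‖Â v‖ = σ_{k+1}(Â)`. Dividing by `|det A₁₁|`, using the Schur
complement formula `det Â = det A₁₁ * γ`, gives the bound.
-/

lemma kthLargest_mem_range {ι : Type*} [Fintype ι] [Nonempty ι] (f : ι → ℝ) {k : ℕ}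
    (hk : 0 < k) : ∃ i, kthLargest f k = f i := by
  set l := (Finset.univ.val.map f).sort (· ≤ ·)
  have hidx : Fintype.card ι - k < l.length := by
    have := Fintype.card_pos (α := ι)
    simp only [l, Multiset.length_sort, Multiset.card_map]
    change _ < Fintype.card ι
    omega
  obtain ⟨i, -, hi⟩ := Multiset.mem_map.mp ((Multiset.mem_sort _).mp (List.getElem_mem hidx))
  exact ⟨i, (List.getD_eq_getElem _ 0 hidx).trans hi.symm⟩

lemma sum_sq_mulVec_le {m n : Type*} [Fintype m] [Fintype n] (M : Matrix m n ℝ) {K : ℝ}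
    (hK : ∀ i j, |M i j| ≤ K) (w : n → ℝ) :
    ∑ i, (M *ᵥ w) i ^ 2 ≤ Fintype.card m * (Fintype.card n * K ^ 2) * ∑ j, w j ^ 2 := by
  have hrow (i : m) : ∑ j, M i j ^ 2 ≤ Fintype.card n * K ^ 2 := by
    simpa using Finset.sum_le_sum fun j (_ : j ∈ Finset.univ) ↦
      sq_le_sq.mpr ((hK i j).trans (le_abs_self K))
  calc ∑ i, (M *ᵥ w) i ^ 2 ≤ ∑ _i : m, Fintype.card n * K ^ 2 * ∑ j, w j ^ 2 :=
        Finset.sum_le_sum fun i _ ↦ (Finset.sum_mul_sq_le_sq_mul_sq _ _ _).trans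
          (mul_le_mul_of_nonneg_right (hrow i) (by positivity))
    _ = _ := by simp [mul_assoc]

lemma eigenvalues_conjTranspose_mul_self_eq_sum_sq {m n : Type*} [Fintype m] [Fintype n]
    [DecidableEq n] (M : Matrix m n ℝ) (j : n) :
    (isHermitian_conjTranspose_mul_self M).eigenvalues j =
      ∑ i, (M *ᵥ (isHermitian_conjTranspose_mul_self M).eigenvectorBasis j) i ^ 2 := by
  rw [IsHermitian.eigenvalues_eq, ← mulVec_mulVec, dotProduct_mulVec]
  simp [dotProduct, sq, conjTranspose_eq_transpose_of_trivial, vecMul_transpose]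

lemma sum_sq_eigenvectorBasis {n : Type*} [Fintype n] [DecidableEq n] {A : Matrix n n ℝ}
    (hA : A.IsHermitian) (j : n) : ∑ i, hA.eigenvectorBasis j i ^ 2 = 1 := by
  have := hA.eigenvectorBasis.orthonormal.1 j
  rw [EuclideanSpace.norm_eq, Real.sqrt_eq_one] at this
  simpa using this

lemma abs_det_le_card_mul_singularValue {n : Type*} [Fintype n] [DecidableEq n] [Nonempty n]
    (M : Matrix n n ℝ) {K : ℝ} (hK : ∀ i j, |adjugate M i j| ≤ K) :
    |M.det| ≤ Fintype.card n * K * singularValue M (Fintype.card n) := by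
  have hH := isHermitian_conjTranspose_mul_self M
  obtain ⟨j, hj⟩ := kthLargest_mem_range hH.eigenvalues (Fintype.card_pos (α := n))
  set v : n → ℝ := ⇑(hH.eigenvectorBasis j)
  have hK0 : 0 ≤ K := (abs_nonneg _).trans (hK (Classical.arbitrary n) (Classical.arbitrary n))
  have hsq : M.det ^ 2 ≤ (Fintype.card n * K) ^ 2 * hH.eigenvalues j := by
    calc M.det ^ 2 = ∑ i, (adjugate M *ᵥ (M *ᵥ v)) i ^ 2 := by
          rw [mulVec_mulVec, adjugate_mul, smul_mulVec, one_mulVec]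
          simp only [Pi.smul_apply, smul_eq_mul, mul_pow, ← Finset.mul_sum, v,
            sum_sq_eigenvectorBasis hH j, mul_one]
      _ ≤ Fintype.card n * (Fintype.card n * K ^ 2) * ∑ i, (M *ᵥ v) i ^ 2 :=
          sum_sq_mulVec_le _ hK _
      _ = (Fintype.card n * K) ^ 2 * hH.eigenvalues j := by
          rw [eigenvalues_conjTranspose_mul_self_eq_sum_sq]; ring
  calc |M.det| ≤ √((Fintype.card n * K) ^ 2 * hH.eigenvalues j) := Real.abs_le_sqrt hsq
    _ = _ := by
      rw [Real.sqrt_mul (by positivity), Real.sqrt_sq (by positivity), singularValue, hj]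

lemma abs_adjugate_le_of_abs_det_submatrix_le {R ι : Type*} [CommRing R] [LinearOrder R]
    [IsStrictOrderedRing R] [Fintype ι] [DecidableEq ι] {k : ℕ} (hι : Fintype.card ι = k + 1)
    (M : Matrix ι ι R) {K : R}
    (hK : ∀ r c : Fin k → ι, Function.Injective r → Function.Injective c →
      |(M.submatrix r c).det| ≤ K) (i j : ι) :
    |adjugate M i j| ≤ K := by
  let e : Fin (k + 1) ≃ ι := (Fintype.equivFinOfCardEq hι).symm
  obtain ⟨i, rfl⟩ := e.surjective i
  obtain ⟨j, rfl⟩ := e.surjective j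
  have he : adjugate M (e i) (e j) = adjugate (M.submatrix e e) i j := by
    rw [adjugate_submatrix_equiv_self]; rfl
  rw [he, adjugate_fin_succ_eq_det_submatrix, abs_mul, abs_pow, abs_neg, abs_one, one_pow,
    one_mul, submatrix_submatrix]
  exact hK _ _ (e.injective.comp Fin.succAbove_right_injective)
    (e.injective.comp Fin.succAbove_right_injective)

lemma det_fromBlocks_unit_eq_det_mul_schur {R n : Type*} [CommRing R] [Fintype n]
    [DecidableEq n] (A : Matrix n n R) (hA : IsUnit A.det) (b c : n → R) (α : R) :
    (fromBlocks A (of fun i (_ : Unit) => b i) (of fun (_ : Unit) j => c j)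
      (of fun (_ : Unit) (_ : Unit) => α)).det = A.det * (α - c ⬝ᵥ A⁻¹ *ᵥ b) := by
  have := A.invertibleOfIsUnitDet hA
  rw [det_fromBlocks₁₁, det_unique (n := Unit)]
  simp only [invOf_eq_nonsing_inv, PUnit.default_eq_unit, Matrix.sub_apply, of_apply, mul_apply,
    Finset.sum_mul, mul_assoc, dotProduct, mulVec, Finset.mul_sum]
  rw [Finset.sum_comm]

theorem schur_entry_le_of_global_maxvol_general {k : ℕ} (A₁₁ : Matrix (Fin k) (Fin k) ℝ)
    (hA : IsUnit A₁₁.det) (b c : Fin k → ℝ) (α : ℝ) (ρ : ℝ)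
    (hmax : ∀ (r cc : Fin k → Fin k ⊕ Unit),
      Function.Injective r → Function.Injective cc →
      |((Matrix.fromBlocks A₁₁ (Matrix.of fun i (_ : Unit) => b i)
          (Matrix.of fun (_ : Unit) j => c j) (Matrix.of fun (_ : Unit) (_ : Unit) => α)).submatrix r cc).det|
        ≤ ρ * |A₁₁.det|) :
    |α - c ⬝ᵥ A₁₁⁻¹ *ᵥ b| ≤ ρ * (k + 1) *
      singularValue (Matrix.fromBlocks A₁₁ (Matrix.of fun i (_ : Unit) => b i)
        (Matrix.of fun (_ : Unit) j => c j) (Matrix.of fun (_ : Unit) (_ : Unit) => α)) (k + 1) := by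
  have hcard : Fintype.card (Fin k ⊕ Unit) = k + 1 := by simp
  have hbound := abs_det_le_card_mul_singularValue _
    (abs_adjugate_le_of_abs_det_submatrix_le hcard _ hmax)
  rw [det_fromBlocks_unit_eq_det_mul_schur A₁₁ hA, abs_mul, hcard, Nat.cast_add_one] at hbound
  refine le_of_mul_le_mul_left ?_ (abs_pos.mpr hA.ne_zero)
  linarith

/-- Let `Ahat = [[A₁₁, b], [cᵀ, α]]` be a `(k+1) × (k+1)` real matrix whose leading `k × k`
block `A₁₁` is nonsingular, let `ρ ≥ 1`, and suppose `A₁₁` has global `ρ`-maximum volume in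
`Ahat` (every `k × k` submatrix of `Ahat` has absolute determinant at most `ρ * |det A₁₁|`).
Then the Schur complement `γ = α − cᵀ A₁₁⁻¹ b` satisfies `|γ| ≤ ρ (k+1) σ_{k+1}(Ahat)`. -/
theorem schur_entry_le_of_global_maxvol {k : ℕ} (A₁₁ : Matrix (Fin k) (Fin k) ℝ)
    (hA : IsUnit A₁₁.det) (b c : Fin k → ℝ) (α : ℝ) (ρ : ℝ) (hρ : 1 ≤ ρ)
    (hmax : ∀ (r cc : Fin k → Fin k ⊕ Unit),
      Function.Injective r → Function.Injective cc →
      |((Matrix.fromBlocks A₁₁ (Matrix.of fun i (_ : Unit) => b i)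
          (Matrix.of fun (_ : Unit) j => c j) (Matrix.of fun (_ : Unit) (_ : Unit) => α)).submatrix r cc).det|
        ≤ ρ * |A₁₁.det|) :
    |α - c ⬝ᵥ A₁₁⁻¹ *ᵥ b| ≤ ρ * (k + 1) *
      singularValue (Matrix.fromBlocks A₁₁ (Matrix.of fun i (_ : Unit) => b i)
        (Matrix.of fun (_ : Unit) j => c j) (Matrix.of fun (_ : Unit) (_ : Unit) => α)) (k + 1) :=
  schur_entry_le_of_global_maxvol_general A₁₁ hA b c α ρ hmax
end

section
/- Let A be an m×n real matrix partitioned as A = [[A₁₁, A₁₂],[A₂₁, A₂₂]] with A₁₁ a nonsingular k×k block, k < min(m,n), having local ρ-maximum volume in A for some ρ ≥ 1. Then ‖A/A₁₁‖_C ≤ ρ(k+1)·σ_{k+1}(A). -/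
open Matrix

/-!
Fix an entry `s = (A / A₁₁) p q` and let `Â` be the `(k+1) × (k+1)` submatrix of `A` on the rows
of `A₁₁` and `p` and the columns of `A₁₁` and `q`. By the Schur determinant formula
`det Â = det A₁₁ * s`. The entries of `Â⁻¹` are `k × k` minors of `Â` divided by `det Â`, so local
maximality of the volume bounds them by `ρ / |s|`, whence `‖Â y‖ ≥ |s| ‖y‖ / (ρ (k+1))`.
Extending vectors by zero, `A` expands a `(k+1)`-dimensional subspace by the same factor, and by
the min-max principle `σ_{k+1}(A)` is at least that factor.
-/

open Function Finset

lemma List.countP_le_length_sub_of_getElem_lt {α : Type*} [LinearOrder α] {l : List α}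
    (hl : l.Pairwise (· ≤ ·)) {p : ℕ} (hp : p < l.length) {t : α} (ht : l[p] < t) :
    l.countP (fun x => t ≤ x) ≤ l.length - (p + 1) := by
  have htake : (l.take (p + 1)).countP (fun x => t ≤ x) = 0 := by
    rw [List.countP_eq_zero]
    intro x hx
    obtain ⟨i, hi, rfl⟩ := List.getElem_of_mem hx
    rw [List.length_take] at hi
    have hle : l[i] ≤ l[p] := hl.rel_get_of_le (a := ⟨i, by omega⟩) (b := ⟨p, hp⟩) (by simp; omega)
    simpa using (hle.trans_lt ht)
  calc l.countP (fun x => t ≤ x)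
      = (l.take (p + 1)).countP (fun x => t ≤ x) + (l.drop (p + 1)).countP (fun x => t ≤ x) := by
        rw [← List.countP_append, List.take_append_drop]
    _ ≤ l.length - (p + 1) := by
        rw [htake, zero_add, ← List.length_drop]
        exact List.countP_le_length

lemma le_kthLargest_of_le_card_filter {ι : Type*} [Fintype ι] {f : ι → ℝ} {K : ℕ} {t : ℝ}
    (hK : 1 ≤ K) (h : K ≤ #{i | t ≤ f i}) : t ≤ kthLargest f K := by
  rw [kthLargest]
  set l := (univ.val.map f).sort (· ≤ ·)
  have hlen : l.length = Fintype.card ι := by simp [l, Finset.card_univ]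
  have hKcard : K ≤ Fintype.card ι := h.trans (card_le_univ _)
  have hidx : Fintype.card ι - K < l.length := by omega
  have hcount : #{i | t ≤ f i} = l.countP (fun x => t ≤ x) := by
    rw [← Multiset.coe_countP, Multiset.sort_eq, Multiset.countP_map]
    rfl
  rw [List.getD_eq_getElem _ _ hidx]
  by_contra! hlt
  have := List.countP_le_length_sub_of_getElem_lt (l := l) (Multiset.pairwise_sort _ _) hidx hlt
  omega

lemma abs_adjugate_apply_le {R ι : Type*} [CommRing R] [LinearOrder R] [IsStrictOrderedRing R]
    [Fintype ι] [DecidableEq ι] {k : ℕ} (hι : Fintype.card ι = k + 1) (B : Matrix ι ι R) {M : R}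
    (hM : ∀ r c : Fin k → ι, Injective r → Injective c → |(B.submatrix r c).det| ≤ M)
    (i j : ι) : |B.adjugate i j| ≤ M := by
  let e : Fin (k + 1) ≃ ι := (Fintype.equivFinOfCardEq hι).symm
  have hB : B.adjugate i j = (B.submatrix e e).adjugate (e.symm i) (e.symm j) := by
    simp [adjugate_submatrix_equiv_self]
  rw [hB, adjugate_fin_succ_eq_det_submatrix, abs_mul, abs_pow, abs_neg, abs_one, one_pow,
    one_mul, submatrix_submatrix]
  exact hM _ _ (e.injective.comp Fin.succAbove_right_injective)
    (e.injective.comp Fin.succAbove_right_injective)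

lemma sum_sq_mulVec_le_s11 {ι κ : Type*} [Fintype ι] [Fintype κ] (M : Matrix ι κ ℝ) {c : ℝ}
    (hM : ∀ a b, |M a b| ≤ c) (z : κ → ℝ) :
    ∑ a, (M *ᵥ z) a ^ 2 ≤ Fintype.card ι * Fintype.card κ * c ^ 2 * ∑ b, z b ^ 2 := by
  have hrow : ∀ a, (M *ᵥ z) a ^ 2 ≤ Fintype.card κ * c ^ 2 * ∑ b, z b ^ 2 := fun a => calc
    (M *ᵥ z) a ^ 2 ≤ (∑ b, |M a b| * |z b|) ^ 2 := by
        rw [← sq_abs]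
        gcongr
        simpa only [mulVec, dotProduct, abs_mul] using
          abs_sum_le_sum_abs (fun b => M a b * z b) univ
    _ ≤ (∑ b, c * |z b|) ^ 2 := by gcongr with b; exact hM a b
    _ = c ^ 2 * (∑ b, |z b|) ^ 2 := by rw [← mul_sum, mul_pow]
    _ ≤ c ^ 2 * (Fintype.card κ * ∑ b, |z b| ^ 2) := by
        gcongr
        simpa using sq_sum_le_card_mul_sum_sq (s := univ) (f := fun b => |z b|)
    _ = Fintype.card κ * c ^ 2 * ∑ b, z b ^ 2 := by simp only [sq_abs]; ring
  calc ∑ a, (M *ᵥ z) a ^ 2 ≤ ∑ _a : ι, Fintype.card κ * c ^ 2 * ∑ b, z b ^ 2 :=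
        sum_le_sum fun a _ => hrow a
    _ = _ := by rw [sum_const, card_univ, nsmul_eq_mul]; ring

lemma sum_sq_eq_dotProduct {κ : Type*} [Fintype κ] (v : κ → ℝ) : ∑ i, v i ^ 2 = v ⬝ᵥ v := by
  simp [dotProduct, sq]

lemma exists_sum_sq_mulVec_eq_sum_eigenvalues_mul {m n : Type*} [Fintype m] [Fintype n]
    [DecidableEq n] (A : Matrix m n ℝ) :
    ∃ U : Matrix n n ℝ, (∀ x, ∑ i, (Uᵀ *ᵥ x) i ^ 2 = ∑ i, x i ^ 2) ∧
      ∀ x, ∑ i, (A *ᵥ x) i ^ 2 =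
        ∑ i, (isHermitian_conjTranspose_mul_self A).eigenvalues i * (Uᵀ *ᵥ x) i ^ 2 := by
  set hH := isHermitian_conjTranspose_mul_self A
  set U : Matrix n n ℝ := (hH.eigenvectorUnitary : Matrix n n ℝ)
  have hstar : star U = Uᵀ := by
    rw [star_eq_conjTranspose, conjTranspose_eq_transpose_of_trivial]
  have hUUt : U * Uᵀ = 1 := hstar ▸ mem_unitaryGroup_iff.mp hH.eigenvectorUnitary.2
  have hspec : Aᵀ * A = U * diagonal hH.eigenvalues * Uᵀ := by
    have := hH.spectral_theorem
    simp only [RCLike.ofReal_real_eq_id, Function.id_comp, Unitary.conjStarAlgAut_apply] at this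
    rwa [← conjTranspose_eq_transpose_of_trivial, ← hstar]
  refine ⟨U, fun x => ?_, fun x => ?_⟩
  · rw [sum_sq_eq_dotProduct, sum_sq_eq_dotProduct, dotProduct_mulVec, vecMul_transpose,
      mulVec_mulVec, hUUt, one_mulVec]
  · calc ∑ i, (A *ᵥ x) i ^ 2 = x ⬝ᵥ ((Aᵀ * A) *ᵥ x) := by
          rw [sum_sq_eq_dotProduct, ← mulVec_mulVec, dotProduct_mulVec x, vecMul_transpose]
      _ = (Uᵀ *ᵥ x) ⬝ᵥ (diagonal hH.eigenvalues *ᵥ (Uᵀ *ᵥ x)) := by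
          rw [hspec, ← mulVec_mulVec, ← mulVec_mulVec, dotProduct_mulVec, mulVec_transpose]
      _ = ∑ i, hH.eigenvalues i * (Uᵀ *ᵥ x) i ^ 2 := by
          simp only [dotProduct, mulVec_diagonal]
          exact sum_congr rfl fun i _ => by ring

lemma singularValue_nonneg {m n : Type*} [Fintype m] [Fintype n] [DecidableEq n]
    (A : Matrix m n ℝ) (K : ℕ) : 0 ≤ singularValue A K :=
  Real.sqrt_nonneg _

theorem le_singularValue_of_le_finrank {m n : Type*} [Fintype m] [Fintype n] [DecidableEq n]
    (A : Matrix m n ℝ) {V : Submodule ℝ (n → ℝ)} {K : ℕ} (hK : 1 ≤ K)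
    (hV : K ≤ Module.finrank ℝ V) {σ : ℝ}
    (hσ : ∀ x ∈ V, σ ^ 2 * ∑ j, x j ^ 2 ≤ ∑ i, (A *ᵥ x) i ^ 2) :
    σ ≤ singularValue A K := by
  classical
  obtain ⟨U, hU, hAU⟩ := exists_sum_sq_mulVec_eq_sum_eigenvalues_mul A
  set μ := (isHermitian_conjTranspose_mul_self A).eigenvalues
  set S := ({i | σ ^ 2 ≤ μ i} : Finset n)
  suffices hS : K ≤ #S from
    (le_abs_self σ).trans (Real.abs_le_sqrt (le_kthLargest_of_le_card_filter hK hS))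
  by_contra! hS
  -- a nonzero `x ∈ V` whose coordinates in the eigenbasis vanish on the eigenvalues `≥ σ ^ 2`
  let T : V →ₗ[ℝ] (S → ℝ) := LinearMap.funLeft ℝ ℝ Subtype.val ∘ₗ mulVecLin Uᵀ ∘ₗ V.subtype
  obtain ⟨⟨x, hxV⟩, hxT, hx0⟩ := (Submodule.ne_bot_iff _).1 <|
    LinearMap.ker_ne_bot_of_finrank_lt (f := T) (by simpa using hS.trans_le hV)
  have hvanish : ∀ i, σ ^ 2 ≤ μ i → (Uᵀ *ᵥ x) i = 0 := fun i hi =>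
    congrFun hxT ⟨i, by simpa [S] using hi⟩
  have hne : (∑ i, (Uᵀ *ᵥ x) i ^ 2) ≠ 0 := by
    rw [hU, sum_sq_eq_dotProduct]
    simpa [dotProduct_self_eq_zero] using hx0
  obtain ⟨i₀, -, hi₀⟩ := exists_ne_zero_of_sum_ne_zero hne
  have hlt : ∑ i, μ i * (Uᵀ *ᵥ x) i ^ 2 < ∑ i, σ ^ 2 * (Uᵀ *ᵥ x) i ^ 2 := by
    refine sum_lt_sum (fun i _ => ?_) ⟨i₀, mem_univ _, ?_⟩
    · by_cases hi : σ ^ 2 ≤ μ i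
      · simp [hvanish i hi]
      · gcongr; exact (not_le.1 hi).le
    · have hμ : μ i₀ < σ ^ 2 := not_le.1 fun h => hi₀ (by simp [hvanish i₀ h])
      gcongr
  have := hσ x hxV
  rw [hAU, ← hU, mul_sum] at this
  exact this.not_gt hlt

lemma dotProduct_extend_zero {R n n' : Type*} [NonUnitalNonAssocSemiring R] [Fintype n]
    [Fintype n'] {c : n' → n} (hc : Injective c) (v : n → R) (y : n' → R) :
    v ⬝ᵥ extend c y (0 : n → R) = (v ∘ c) ⬝ᵥ y := by
  classical
  have hzero : ∀ j ∈ univ, j ∉ univ.map ⟨c, hc⟩ → v j * extend c y 0 j = 0 := by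
    intro j _ hj
    rw [extend_apply' _ _ _ (by simpa using hj), Pi.zero_apply, mul_zero]
  rw [dotProduct, ← sum_subset (subset_univ _) hzero, sum_map]
  simp [dotProduct, hc.extend_apply]

theorem le_singularValue_of_submatrix {m n m' n' : Type*} [Fintype m] [Fintype n] [Fintype m']
    [Fintype n'] [DecidableEq n] (A : Matrix m n ℝ) {r : m' → m} {c : n' → n}
    (hr : Injective r) (hc : Injective c) {K : ℕ} (hK : 1 ≤ K) (hKc : K ≤ Fintype.card n')
    {σ : ℝ} (hσ : ∀ y, σ ^ 2 * ∑ j, y j ^ 2 ≤ ∑ i, (A.submatrix r c *ᵥ y) i ^ 2) :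
    σ ≤ singularValue A K := by
  let E := ExtendByZero.linearMap ℝ c
  have hE : Injective E := extend_injective hc (0 : n → ℝ)
  refine le_singularValue_of_le_finrank A (V := LinearMap.range E) hK
    (by rwa [LinearMap.finrank_range_of_inj hE, Module.finrank_fintype_fun_eq_card]) ?_
  rintro _ ⟨y, rfl⟩
  have hnorm : ∑ j, E y j ^ 2 = ∑ j, y j ^ 2 := by
    simp only [sum_sq_eq_dotProduct, E, ExtendByZero.linearMap_apply,
      dotProduct_extend_zero hc, comp_def, hc.extend_apply]
  have hrows : ∀ i, (A.submatrix r c *ᵥ y) i = (A *ᵥ E y) (r i) := fun i =>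
    (dotProduct_extend_zero hc (A (r i)) y).symm
  calc σ ^ 2 * ∑ j, E y j ^ 2 ≤ ∑ i, (A *ᵥ E y) (r i) ^ 2 := by simpa [hnorm, hrows] using hσ y
    _ = ∑ i ∈ univ.map ⟨r, hr⟩, (A *ᵥ E y) i ^ 2 :=
        (sum_map univ ⟨r, hr⟩ fun i => (A *ᵥ E y) i ^ 2).symm
    _ ≤ ∑ i, (A *ᵥ E y) i ^ 2 := sum_le_univ_sum_of_nonneg fun i => sq_nonneg _

theorem abs_det_submatrix_le_mul_singularValue {m n ι : Type*} [Fintype m] [Fintype n]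
    [Fintype ι] [DecidableEq n] [DecidableEq ι] (A : Matrix m n ℝ) {r : ι → m} {c : ι → n}
    (hr : Injective r) (hc : Injective c) {k : ℕ} (hι : Fintype.card ι = k + 1) {M : ℝ}
    (hM₀ : 0 < M) (hM : ∀ r' c' : Fin k → ι, Injective r' → Injective c' →
      |((A.submatrix r c).submatrix r' c').det| ≤ M) :
    |(A.submatrix r c).det| ≤ (k + 1) * M * singularValue A (k + 1) := by
  set B := A.submatrix r c
  have hσ₀ := singularValue_nonneg A (k + 1)
  rcases eq_or_ne B.det 0 with hB | hB
  · rw [hB, abs_zero]; positivity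
  have hB' : 0 < |B.det| := abs_pos.2 hB
  rw [← div_le_iff₀' (by positivity)]
  refine le_singularValue_of_submatrix A hr hc (by omega) hι.ge fun y => ?_
  have hinv : ∀ i j, |B⁻¹ i j| ≤ M / |B.det| := fun i j => by
    rw [Matrix.inv_def, Ring.inverse_eq_inv', Matrix.smul_apply, smul_eq_mul, abs_mul, abs_inv,
      inv_mul_eq_div]
    gcongr
    exact abs_adjugate_apply_le hι B hM i j
  have hy := sum_sq_mulVec_le_s11 B⁻¹ hinv (B *ᵥ y)
  rw [mulVec_mulVec, nonsing_inv_mul _ (isUnit_iff_ne_zero.2 hB), one_mulVec, hι] at hy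
  calc (|B.det| / ((k + 1) * M)) ^ 2 * ∑ j, y j ^ 2
      ≤ (|B.det| / ((k + 1) * M)) ^ 2 * (((k + 1 : ℕ) : ℝ) * ((k + 1 : ℕ) : ℝ) * (M / |B.det|) ^ 2
          * ∑ i, (B *ᵥ y) i ^ 2) := by gcongr
    _ = ∑ i, (B *ᵥ y) i ^ 2 := by field_simp; push_cast; ring

lemma fromBlocks_submatrix_sum_map_id {l m n o l' o' α : Type*} (A : Matrix n l α)
    (B : Matrix n m α) (C : Matrix o l α) (D : Matrix o m α) (f : o' → o) (g : l' → m) :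
    (fromBlocks A B C D).submatrix (Sum.map id f) (Sum.map id g) =
      fromBlocks A (B.submatrix id g) (C.submatrix f id) (D.submatrix f g) := by
  ext (i | i) (j | j) <;> rfl

lemma det_fromBlocks_of_isUnit {m n R : Type*} [Fintype m] [DecidableEq m] [Fintype n]
    [DecidableEq n] [CommRing R] {A : Matrix m m R} (hA : IsUnit A.det) (B : Matrix m n R)
    (C : Matrix n m R) (D : Matrix n n R) :
    (fromBlocks A B C D).det = A.det * (D - C * A⁻¹ * B).det := by
  have := A.invertibleOfIsUnitDet hA
  rw [det_fromBlocks₁₁, invOf_eq_nonsing_inv]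

lemma abs_schur_apply_le_mul_singularValue {k m₂ n₂ : ℕ} {A₁₁ : Matrix (Fin k) (Fin k) ℝ}
    (hA : IsUnit A₁₁.det) (A₁₂ : Matrix (Fin k) (Fin n₂) ℝ) (A₂₁ : Matrix (Fin m₂) (Fin k) ℝ)
    (A₂₂ : Matrix (Fin m₂) (Fin n₂) ℝ) {ρ : ℝ} (hρ : 0 < ρ) (p : Fin m₂) (q : Fin n₂)
    (hloc : ∀ r c : Fin k → Fin k ⊕ Unit, Injective r → Injective c →
      |((fromBlocks A₁₁ (A₁₂.submatrix id fun _ : Unit => q)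
        (A₂₁.submatrix (fun _ : Unit => p) id)
        (A₂₂.submatrix (fun _ : Unit => p) fun _ : Unit => q)).submatrix r c).det| ≤
          ρ * |A₁₁.det|) :
    |(A₂₂ - A₂₁ * A₁₁⁻¹ * A₁₂) p q| ≤
      ρ * (k + 1) * singularValue (fromBlocks A₁₁ A₁₂ A₂₁ A₂₂) (k + 1) := by
  have hd : 0 < |A₁₁.det| := abs_pos.2 hA.ne_zero
  have hvol := abs_det_submatrix_le_mul_singularValue (fromBlocks A₁₁ A₁₂ A₂₁ A₂₂)
    (r := Sum.map id fun _ : Unit => p) (c := Sum.map id fun _ : Unit => q)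
    (Sum.map_injective.2 ⟨injective_id, injective_of_subsingleton _⟩)
    (Sum.map_injective.2 ⟨injective_id, injective_of_subsingleton _⟩) (k := k) (by simp)
    (mul_pos hρ hd) (by rwa [fromBlocks_submatrix_sum_map_id])
  -- the Schur complement of `A₁₁` in the local block is the `(p, q)` entry of `A / A₁₁`
  have hschur : ((A₂₂.submatrix (fun _ : Unit => p) fun _ : Unit => q) -
      A₂₁.submatrix (fun _ : Unit => p) id * A₁₁⁻¹ * A₁₂.submatrix id fun _ : Unit => q).det =
        (A₂₂ - A₂₁ * A₁₁⁻¹ * A₁₂) p q := by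
    rw [det_unique]; rfl
  rw [fromBlocks_submatrix_sum_map_id, det_fromBlocks_of_isUnit hA, hschur, abs_mul] at hvol
  exact le_of_mul_le_mul_left (hvol.trans_eq (by ring)) hd

theorem schur_cnorm_le_of_local_maxvol_general {k m₂ n₂ : ℕ}
    (A₁₁ : Matrix (Fin k) (Fin k) ℝ) (A₁₂ : Matrix (Fin k) (Fin n₂) ℝ)
    (A₂₁ : Matrix (Fin m₂) (Fin k) ℝ) (A₂₂ : Matrix (Fin m₂) (Fin n₂) ℝ)
    (hA : IsUnit A₁₁.det) (ρ : ℝ) (hρ : 1 ≤ ρ)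
    (hloc : ∀ (p : Fin m₂) (q : Fin n₂) (r c : Fin k → Fin k ⊕ Unit),
      Function.Injective r → Function.Injective c →
      |((Matrix.fromBlocks A₁₁ (Matrix.of fun i (_ : Unit) => A₁₂ i q)
          (Matrix.of fun (_ : Unit) j => A₂₁ p j)
          (Matrix.of fun (_ : Unit) (_ : Unit) => A₂₂ p q)).submatrix r c).det|
        ≤ ρ * |A₁₁.det|) :
    cnorm (A₂₂ - A₂₁ * A₁₁⁻¹ * A₁₂) ≤
      ρ * (k + 1) * singularValue (Matrix.fromBlocks A₁₁ A₁₂ A₂₁ A₂₂) (k + 1) := by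
  have hbound : 0 ≤ ρ * (k + 1) * singularValue (fromBlocks A₁₁ A₁₂ A₂₁ A₂₂) (k + 1) :=
    mul_nonneg (by positivity) (singularValue_nonneg _ _)
  exact Real.iSup_le (fun p => Real.iSup_le (fun q =>
    abs_schur_apply_le_mul_singularValue hA A₁₂ A₂₁ A₂₂ (by linarith) p q (hloc p q)) hbound) hbound

/-- Let `A = [[A₁₁, A₁₂], [A₂₁, A₂₂]]` be an `m × n` real matrix with `A₁₁` a nonsingular
`k × k` block, `k < min(m,n)`, having local `ρ`-maximum volume in `A` for some `ρ ≥ 1`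
(i.e. `A₁₁` has global `ρ`-maximum volume in every `(k+1) × (k+1)` submatrix
`Ahat p q = [[A₁₁, A₁₂ col q], [A₂₁ row p, A₂₂ p q]]` of `A` containing `A₁₁`).
Then `‖A/A₁₁‖_C ≤ ρ (k+1) σ_{k+1}(A)`. -/
theorem schur_cnorm_le_of_local_maxvol {k m₂ n₂ : ℕ} (hm : 0 < m₂) (hn : 0 < n₂)
    (A₁₁ : Matrix (Fin k) (Fin k) ℝ) (A₁₂ : Matrix (Fin k) (Fin n₂) ℝ)
    (A₂₁ : Matrix (Fin m₂) (Fin k) ℝ) (A₂₂ : Matrix (Fin m₂) (Fin n₂) ℝ)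
    (hA : IsUnit A₁₁.det) (ρ : ℝ) (hρ : 1 ≤ ρ)
    (hloc : ∀ (p : Fin m₂) (q : Fin n₂) (r c : Fin k → Fin k ⊕ Unit),
      Function.Injective r → Function.Injective c →
      |((Matrix.fromBlocks A₁₁ (Matrix.of fun i (_ : Unit) => A₁₂ i q)
          (Matrix.of fun (_ : Unit) j => A₂₁ p j)
          (Matrix.of fun (_ : Unit) (_ : Unit) => A₂₂ p q)).submatrix r c).det|
        ≤ ρ * |A₁₁.det|) :
    cnorm (A₂₂ - A₂₁ * A₁₁⁻¹ * A₁₂) ≤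
      ρ * (k + 1) * singularValue (Matrix.fromBlocks A₁₁ A₁₂ A₂₁ A₂₂) (k + 1) :=
  schur_cnorm_le_of_local_maxvol_general A₁₁ A₁₂ A₂₁ A₂₂ hA ρ hρ hloc
end

section
/- Let A be an m×n real matrix and let A₁₁ be a nonsingular k×k submatrix of A having local ρ-maximum volume in A for some ρ ≥ 1 (if k = min(m,n), local ρ-maximum volume means global ρ-maximum volume among all k×k submatrices obtained by exchanging one row and/or one column). Then σ_k(A) ≤ ρk√((m−k+1)(n−k+1))·σ_k(A₁₁). -/
/-!
Fix `i, j` and let `Â` be `A₁₁` with row `i` and column `j` deleted. After moving row `i` and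
column `j` of `A₁₁` into the trailing blocks, the Schur complement `S` of `Â` is what is left of
`A` after subtracting a matrix of rank `k - 1`, so `σ_k(A) ≤ ‖S‖_F`. Each of the
`(m - k + 1)(n - k + 1)` entries of `S` is `det(B) / det Â` for a `k × k` submatrix `B` obtained
from `A₁₁` by exchanging at most one row and one column, hence `|S_pq| ≤ ρ |det A₁₁| / |det Â|`.
As `|det Â| / |det A₁₁| = |(A₁₁⁻¹)_ji|`, this gives `σ_k(A) |(A₁₁⁻¹)_ji| ≤ ρ √((m-k+1)(n-k+1))`
for all `i, j`, so `σ_k(A) ‖A₁₁⁻¹‖_F ≤ ρ k √((m-k+1)(n-k+1))`, and `‖A₁₁⁻¹‖_F σ_k(A₁₁) ≥ 1`.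
-/

open Matrix

lemma exists_ne_zero_mulVec_eq_zero_of_rank_lt {m n K : Type*} [Fintype n] [Field K]
    {M : Matrix m n K}
    (h : M.rank < Fintype.card n) : ∃ c ≠ 0, M *ᵥ c = 0 := by
  have hker : LinearMap.ker M.mulVecLin ≠ ⊥ := by
    intro hbot
    have := LinearMap.finrank_range_of_inj (LinearMap.ker_eq_bot.mp hbot)
    rw [Module.finrank_fintype_fun_eq_card] at this
    exact h.ne this
  obtain ⟨c, hc, hc0⟩ := (Submodule.ne_bot_iff _).mp hker
  exact ⟨c, hc0, hc⟩

lemma exists_ne_zero_mulVec_eq_zero_of_rank_lt_card {m n K : Type*} [Fintype n] [DecidableEq n]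
    [Field K] {M : Matrix m n K} {S : Finset n} (h : M.rank < S.card) :
    ∃ y ≠ 0, (∀ i, y i ≠ 0 → i ∈ S) ∧ M *ᵥ y = 0 := by
  set E : Matrix n S K := (1 : Matrix n n K).submatrix id Subtype.val
  obtain ⟨c, hc0, hc⟩ : ∃ c ≠ 0, (M * E) *ᵥ c = 0 :=
    exists_ne_zero_mulVec_eq_zero_of_rank_lt ((rank_mul_le_left _ _).trans_lt (by simpa using h))
  have hEc : ∀ s : S, (E *ᵥ c) s = c s := fun s => by
    simp only [E, mulVec, dotProduct, submatrix_apply, id, one_apply, ite_mul, one_mul, zero_mul,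
      ← Subtype.ext_iff, Finset.sum_ite_eq, Finset.mem_univ, if_true]
  refine ⟨E *ᵥ c, fun h0 => hc0 (funext fun s => by rw [← hEc, h0]; rfl), fun i hi => ?_,
    by rwa [mulVec_mulVec]⟩
  by_contra hiS
  exact hi (Finset.sum_eq_zero fun s _ => by
    simp [E, one_apply, show i ≠ s from fun h => hiS (h ▸ s.2)])

section Schur

variable {l m n K : Type*} [Fintype l] [DecidableEq l] [CommRing K] {P : Matrix l l K}

lemma fromBlocks_sub_fromRows_mul_fromCols (hP : IsUnit P.det) (R : Matrix l n K)
    (C : Matrix m l K) (D : Matrix m n K) :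
    fromBlocks P R C D - fromRows P C * (P⁻¹ * fromCols P R) =
      fromBlocks 0 0 0 (D - C * P⁻¹ * R) := by
  rw [mul_fromCols, nonsing_inv_mul _ hP, fromRows_mul, mul_fromCols, mul_fromCols,
    Matrix.mul_one, Matrix.mul_one, ← Matrix.mul_assoc, mul_nonsing_inv _ hP, Matrix.one_mul,
    ← Matrix.mul_assoc, fromRows_fromCols_eq_fromBlocks, sub_eq_add_neg, fromBlocks_neg,
    fromBlocks_add]
  simp [sub_eq_add_neg]

lemma schur_apply_mul_det (hP : IsUnit P.det) (R : Matrix l n K) (C : Matrix m l K)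
    (D : Matrix m n K) (p : m) (q : n) :
    (D - C * P⁻¹ * R) p q * P.det =
      ((fromBlocks P R C D).submatrix (Sum.map id fun _ : Unit => p)
        (Sum.map id fun _ : Unit => q)).det := by
  let := P.invertibleOfIsUnitDet hP
  have hbord : (fromBlocks P R C D).submatrix (Sum.map id fun _ : Unit => p)
      (Sum.map id fun _ : Unit => q) =
      fromBlocks P (of fun a _ => R a q) (of fun _ b => C p b) (of fun _ _ => D p q) := by
    ext (a | _) (b | _) <;> rfl
  rw [hbord, det_fromBlocks₁₁, mul_comm, invOf_eq_nonsing_inv]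
  congr 1
  rw [det_unique]
  simp [mul_apply]

end Schur

section kthLargest

variable {ι : Type*} [Fintype ι] (f : ι → ℝ)

lemma kthLargest_zero : kthLargest f 0 = 0 :=
  List.getD_eq_default _ _ (by simp)

lemma kthLargest_nonneg (hf : 0 ≤ f) (k : ℕ) : 0 ≤ kthLargest f k := by
  unfold kthLargest
  by_cases hk : Fintype.card ι - k < ((Finset.univ.val.map f).sort (· ≤ ·)).length
  · rw [List.getD_eq_getElem _ _ hk]
    obtain ⟨i, -, hi⟩ := Multiset.mem_map.mp ((Multiset.mem_sort _).mp (List.getElem_mem hk))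
    exact hi ▸ hf i
  · rw [List.getD_eq_default _ _ (not_lt.1 hk)]

lemma exists_kthLargest_eq {k : ℕ} (hk1 : 1 ≤ k) (hk : k ≤ Fintype.card ι) :
    ∃ i, kthLargest f k = f i := by
  have hmem : kthLargest f k ∈ (Finset.univ.val.map f).sort (· ≤ ·) := by
    unfold kthLargest
    rw [List.getD_eq_getElem _ _ (by simp; omega)]
    exact List.getElem_mem _
  obtain ⟨i, -, hi⟩ := Multiset.mem_map.mp ((Multiset.mem_sort _).mp hmem)
  exact ⟨i, hi.symm⟩

lemma exists_card_eq_forall_kthLargest_le {k : ℕ} (hk1 : 1 ≤ k) (hk : k ≤ Fintype.card ι) :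
    ∃ S : Finset ι, S.card = k ∧ ∀ i ∈ S, kthLargest f k ≤ f i := by
  set L := (Finset.univ.val.map f).sort (· ≤ ·) with hL
  set N := Fintype.card ι - k
  have hidx : N < L.length := by simp [L, N]; omega
  have hdrop : L.drop N = kthLargest f k :: L.drop (N + 1) := by
    rw [List.drop_eq_getElem_cons hidx, kthLargest, List.getD_eq_getElem _ _ hidx]
  have hge : ∀ x ∈ L.drop N, kthLargest f k ≤ x := by
    have := (Multiset.pairwise_sort (Finset.univ.val.map f) (· ≤ ·)).drop (i := N)
    rw [hdrop] at this ⊢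
    exact List.forall_mem_cons.2 ⟨le_rfl, fun _ => List.rel_of_pairwise_cons this⟩
  have hcount : k ≤ (Finset.univ.filter fun i => kthLargest f k ≤ f i).card := by
    calc k = (L.drop N).length := by simp [L, N]; omega
      _ = (L.drop N).countP (kthLargest f k ≤ ·) :=
          (List.countP_eq_length.2 fun x hx => by simpa using hge x hx).symm
      _ ≤ L.countP (kthLargest f k ≤ ·) := (List.drop_sublist _ _).countP_le
      _ = _ := by
          rw [← Multiset.coe_countP, hL, Multiset.sort_eq, Multiset.countP_map]
          rfl
  obtain ⟨S, hS, hScard⟩ := Finset.exists_subset_card_eq hcount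
  exact ⟨S, hScard, fun i hi => (Finset.mem_filter.mp (hS hi)).2⟩

end kthLargest

variable {l m n : Type*} [Fintype l] [Fintype m] [Fintype n]

def frobeniusSq (M : Matrix m n ℝ) : ℝ := ∑ i, ∑ j, M i j ^ 2

lemma frobeniusSq_smul (c : ℝ) (M : Matrix m n ℝ) :
    frobeniusSq (c • M) = c ^ 2 * frobeniusSq M := by
  simp only [frobeniusSq, Matrix.smul_apply, smul_eq_mul, mul_pow, Finset.mul_sum]

lemma frobeniusSq_le_of_abs_le {M : Matrix m n ℝ} {w : ℝ} (h : ∀ i j, |M i j| ≤ w) :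
    frobeniusSq M ≤ Fintype.card m * Fintype.card n * w ^ 2 := by
  calc frobeniusSq M ≤ ∑ _i : m, ∑ _j : n, w ^ 2 := by
        refine Finset.sum_le_sum fun i _ => Finset.sum_le_sum fun j _ => ?_
        exact sq_le_sq' (abs_le.1 (h i j)).1 (abs_le.1 (h i j)).2
    _ = _ := by simp [mul_assoc]

lemma frobeniusSq_submatrix_equiv {m' n' : Type*} [Fintype m'] [Fintype n'] (M : Matrix m n ℝ)
    (eR : m' ≃ m) (eC : n' ≃ n) : frobeniusSq (M.submatrix eR eC) = frobeniusSq M := by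
  simp only [frobeniusSq, submatrix_apply]
  rw [eR.sum_comp fun i => ∑ j, M i (eC j) ^ 2]
  exact Finset.sum_congr rfl fun i _ => eC.sum_comp fun j => M i j ^ 2

lemma frobeniusSq_fromBlocks_zero {m' n' : Type*} [Fintype m'] [Fintype n']
    (D : Matrix m' n' ℝ) :
    frobeniusSq (fromBlocks (0 : Matrix m n ℝ) 0 0 D) = frobeniusSq D := by
  simp [frobeniusSq, Fintype.sum_sum_type]

lemma dotProduct_mulVec_mulVec (M : Matrix m n ℝ) (N : Matrix m l ℝ) (a : n → ℝ) (b : l → ℝ) :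
    (M *ᵥ a) ⬝ᵥ (N *ᵥ b) = a ⬝ᵥ ((Mᵀ * N) *ᵥ b) := by
  rw [← mulVec_mulVec, dotProduct_mulVec (M *ᵥ a), ← vecMul_transpose, dotProduct_mulVec a,
    dotProduct_mulVec (a ᵥ* Mᵀ)]

lemma mulVec_dotProduct_self_eq (M : Matrix m n ℝ) (x : n → ℝ) :
    (M *ᵥ x) ⬝ᵥ (M *ᵥ x) = x ⬝ᵥ ((Mᴴ * M) *ᵥ x) := by
  rw [dotProduct_mulVec_mulVec, conjTranspose_eq_transpose_of_trivial]

lemma mulVec_dotProduct_self_le (M : Matrix m n ℝ) (x : n → ℝ) :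
    (M *ᵥ x) ⬝ᵥ (M *ᵥ x) ≤ frobeniusSq M * (x ⬝ᵥ x) := by
  have hx : x ⬝ᵥ x = ∑ j, x j ^ 2 := by simp [dotProduct, pow_two]
  calc (M *ᵥ x) ⬝ᵥ (M *ᵥ x) = ∑ i, (∑ j, M i j * x j) ^ 2 := by
        simp [dotProduct, mulVec, pow_two]
    _ ≤ ∑ i, (∑ j, M i j ^ 2) * ∑ j, x j ^ 2 :=
        Finset.sum_le_sum fun i _ => Finset.sum_mul_sq_le_sq_mul_sq _ _ _
    _ = frobeniusSq M * (x ⬝ᵥ x) := by rw [frobeniusSq, Finset.sum_mul, hx]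

section Spectral

variable [DecidableEq n] {H : Matrix n n ℝ}

lemma Matrix.IsHermitian.transpose_eigenvectorUnitary_mul_self (hH : H.IsHermitian) :
    (hH.eigenvectorUnitary : Matrix n n ℝ)ᵀ * hH.eigenvectorUnitary = 1 := by
  rw [← conjTranspose_eq_transpose_of_trivial, ← star_eq_conjTranspose]
  exact Unitary.coe_star_mul_self _

lemma Matrix.IsHermitian.transpose_eigenvectorUnitary_mul_mul_self (hH : H.IsHermitian) :
    (hH.eigenvectorUnitary : Matrix n n ℝ)ᵀ * H * hH.eigenvectorUnitary =
      diagonal hH.eigenvalues := by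
  have := hH.conjStarAlgAut_star_eigenvectorUnitary
  rw [Unitary.conjStarAlgAut_star_apply, star_eq_conjTranspose,
    conjTranspose_eq_transpose_of_trivial] at this
  simpa using this

variable {U : Matrix n n ℝ} {d : n → ℝ}

lemma mulVec_dotProduct_mulVec_mulVec_of_transpose_mul_mul_eq_diagonal
    (hU : Uᵀ * H * U = diagonal d) (y : n → ℝ) :
    (U *ᵥ y) ⬝ᵥ (H *ᵥ (U *ᵥ y)) = ∑ i, d i * y i ^ 2 := by
  rw [mulVec_mulVec, dotProduct_mulVec_mulVec, ← Matrix.mul_assoc, hU]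
  simp only [dotProduct, mulVec_diagonal]
  exact Finset.sum_congr rfl fun i _ => by ring

lemma mul_dotProduct_self_le_of_transpose_mul_mul_eq_diagonal (hU : Uᵀ * H * U = diagonal d)
    {t : ℝ} {y : n → ℝ} (hy : ∀ i, y i ≠ 0 → t ≤ d i) :
    t * (y ⬝ᵥ y) ≤ (U *ᵥ y) ⬝ᵥ (H *ᵥ (U *ᵥ y)) := by
  rw [mulVec_dotProduct_mulVec_mulVec_of_transpose_mul_mul_eq_diagonal hU, dotProduct,
    Finset.mul_sum]
  refine Finset.sum_le_sum fun i _ => ?_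
  by_cases hyi : y i = 0
  · simp [hyi]
  · rw [← pow_two]
    exact mul_le_mul_of_nonneg_right (hy i hyi) (sq_nonneg _)

end Spectral

/-- Some nonzero vector in the span of eigenvectors for the `k` largest eigenvalues of `Aᴴ * A`
lies in `ker B`. -/
lemma kthLargest_eigenvalues_le_frobeniusSq_sub [DecidableEq n] (A B : Matrix m n ℝ) {k : ℕ}
    (hk1 : 1 ≤ k) (hk : k ≤ Fintype.card n) (hB : B.rank < k) :
    kthLargest (isHermitian_conjTranspose_mul_self A).eigenvalues k ≤ frobeniusSq (A - B) := by
  set hH := isHermitian_conjTranspose_mul_self A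
  set U : Matrix n n ℝ := ↑hH.eigenvectorUnitary
  obtain ⟨S, hScard, hS⟩ := exists_card_eq_forall_kthLargest_le hH.eigenvalues hk1 hk
  obtain ⟨y, hy0, hyS, hy⟩ := exists_ne_zero_mulVec_eq_zero_of_rank_lt_card (M := B * U) (S := S)
    (hScard ▸ (rank_mul_le_left _ _).trans_lt hB)
  have hyy : 0 < y ⬝ᵥ y := by
    have := dotProduct_self_star_nonneg y
    rw [star_trivial] at this
    exact this.lt_of_ne' (dotProduct_self_eq_zero.not.2 hy0)
  set x := U *ᵥ y
  have hxx : x ⬝ᵥ x = y ⬝ᵥ y := by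
    rw [dotProduct_mulVec_mulVec, hH.transpose_eigenvectorUnitary_mul_self, one_mulVec]
  have hBx : B *ᵥ x = 0 := by rwa [mulVec_mulVec]
  refine le_of_mul_le_mul_right ?_ hyy
  calc kthLargest hH.eigenvalues k * (y ⬝ᵥ y) ≤ x ⬝ᵥ ((Aᴴ * A) *ᵥ x) :=
        mul_dotProduct_self_le_of_transpose_mul_mul_eq_diagonal
          hH.transpose_eigenvectorUnitary_mul_mul_self fun i hi => hS i (hyS i hi)
    _ = ((A - B) *ᵥ x) ⬝ᵥ ((A - B) *ᵥ x) := by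
        rw [sub_mulVec, hBx, sub_zero, mulVec_dotProduct_self_eq]
    _ ≤ frobeniusSq (A - B) * (y ⬝ᵥ y) := by
        rw [← hxx]
        exact mulVec_dotProduct_self_le _ _

lemma sq_singularValue [DecidableEq n] (M : Matrix m n ℝ) (k : ℕ) :
    singularValue M k ^ 2 = kthLargest (isHermitian_conjTranspose_mul_self M).eigenvalues k :=
  Real.sq_sqrt (kthLargest_nonneg _ (posSemidef_conjTranspose_mul_self M).eigenvalues_nonneg k)

lemma one_le_frobeniusSq_inv_mul_sq_singularValue [DecidableEq n] [Nonempty n]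
    {M : Matrix n n ℝ} (hM : IsUnit M.det) :
    1 ≤ frobeniusSq M⁻¹ * singularValue M (Fintype.card n) ^ 2 := by
  set hH := isHermitian_conjTranspose_mul_self M
  obtain ⟨t, ht⟩ := exists_kthLargest_eq hH.eigenvalues Fintype.card_pos le_rfl
  set v := (hH.eigenvectorUnitary : Matrix n n ℝ) *ᵥ Pi.single t 1
  have hvv : v ⬝ᵥ v = 1 := by
    rw [dotProduct_mulVec_mulVec, hH.transpose_eigenvectorUnitary_mul_self, one_mulVec]
    simp
  have hMv : (M *ᵥ v) ⬝ᵥ (M *ᵥ v) = hH.eigenvalues t := by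
    rw [mulVec_dotProduct_self_eq, mulVec_dotProduct_mulVec_mulVec_of_transpose_mul_mul_eq_diagonal
      hH.transpose_eigenvectorUnitary_mul_mul_self]
    simp [Pi.single_apply]
  calc (1 : ℝ) = (M⁻¹ *ᵥ (M *ᵥ v)) ⬝ᵥ (M⁻¹ *ᵥ (M *ᵥ v)) := by
        rw [mulVec_mulVec, nonsing_inv_mul _ hM, one_mulVec, hvv]
    _ ≤ frobeniusSq M⁻¹ * ((M *ᵥ v) ⬝ᵥ (M *ᵥ v)) := mulVec_dotProduct_self_le _ _
    _ = frobeniusSq M⁻¹ * singularValue M (Fintype.card n) ^ 2 := by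
        rw [hMv, sq_singularValue, ht]

lemma le_mul_singularValue_of_mul_abs_inv_apply_le [DecidableEq n] [Nonempty n]
    {M : Matrix n n ℝ} (hM : IsUnit M.det) {σ c : ℝ} (hσ : 0 ≤ σ)
    (h : ∀ i j, σ * |M⁻¹ i j| ≤ c) :
    σ ≤ Fintype.card n * c * singularValue M (Fintype.card n) := by
  set s := singularValue M (Fintype.card n)
  have hs : 0 ≤ s := Real.sqrt_nonneg _
  have hc : 0 ≤ c := (mul_nonneg hσ (abs_nonneg _)).trans
    (h (Classical.arbitrary n) (Classical.arbitrary n))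
  have hentry : ∀ i j, |(σ • M⁻¹) i j| ≤ c := fun i j => by
    rw [Matrix.smul_apply, smul_eq_mul, abs_mul, abs_of_nonneg hσ]
    exact h i j
  have hsq : σ ^ 2 ≤ (Fintype.card n * c * s) ^ 2 :=
    calc σ ^ 2 ≤ σ ^ 2 * (frobeniusSq M⁻¹ * s ^ 2) :=
          le_mul_of_one_le_right (sq_nonneg σ) (one_le_frobeniusSq_inv_mul_sq_singularValue hM)
      _ = frobeniusSq (σ • M⁻¹) * s ^ 2 := by rw [frobeniusSq_smul, mul_assoc]
      _ ≤ Fintype.card n * Fintype.card n * c ^ 2 * s ^ 2 := by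
          gcongr
          exact frobeniusSq_le_of_abs_le hentry
      _ = (Fintype.card n * c * s) ^ 2 := by ring
  exact (pow_le_pow_iff_left₀ hσ (by positivity) two_ne_zero).1 hsq

section CrossApproximation

variable [DecidableEq l] [DecidableEq n] {m' n' : Type*} [Fintype m'] [Fintype n'] [Nonempty n']

lemma kthLargest_eigenvalues_le_frobeniusSq_schur (M : Matrix m n ℝ) (eR : l ⊕ m' ≃ m)
    (eC : l ⊕ n' ≃ n) {P : Matrix l l ℝ} {R : Matrix l n' ℝ} {C : Matrix m' l ℝ}
    {D : Matrix m' n' ℝ} (hM : M.submatrix eR eC = fromBlocks P R C D) (hP : IsUnit P.det) :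
    kthLargest (isHermitian_conjTranspose_mul_self M).eigenvalues (Fintype.card l + 1) ≤
      frobeniusSq (D - C * P⁻¹ * R) := by
  set B := (fromRows P C * (P⁻¹ * fromCols P R)).submatrix eR.symm eC.symm
  have hB : B.rank < Fintype.card l + 1 := by
    rw [rank_submatrix]
    exact Nat.lt_succ_of_le ((rank_mul_le_left _ _).trans (rank_le_card_width _))
  have hMB : M - B = (fromBlocks 0 0 0 (D - C * P⁻¹ * R)).submatrix eR.symm eC.symm := by
    rw [← fromBlocks_sub_fromRows_mul_fromCols hP, ← hM]
    ext i j
    simp [B]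
  have hcard : Fintype.card l + 1 ≤ Fintype.card n := by
    rw [← Fintype.card_congr eC, Fintype.card_sum]
    exact Nat.add_le_add_left Fintype.card_pos _
  calc _ ≤ frobeniusSq (M - B) :=
        kthLargest_eigenvalues_le_frobeniusSq_sub M B (Nat.le_add_left 1 _) hcard hB
    _ = frobeniusSq (D - C * P⁻¹ * R) := by
        rw [hMB, frobeniusSq_submatrix_equiv, frobeniusSq_fromBlocks_zero]

/-- The Schur complement of a `|l| × |l|` submatrix has entries (bordered minor) / (minor), and
it is what remains after subtracting a rank-`|l|` matrix. -/
lemma singularValue_mul_abs_det_le_of_abs_det_bordered_le (M : Matrix m n ℝ) (eR : l ⊕ m' ≃ m)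
    (eC : l ⊕ n' ≃ n) {V : ℝ} (hV : 0 ≤ V)
    (hbord : ∀ p q, |(M.submatrix (eR ∘ Sum.map id fun _ : Unit => p)
      (eC ∘ Sum.map id fun _ : Unit => q)).det| ≤ V) :
    singularValue M (Fintype.card l + 1) * |(M.submatrix (eR ∘ Sum.inl) (eC ∘ Sum.inl)).det| ≤
      √(Fintype.card m' * Fintype.card n') * V := by
  set N := M.submatrix eR eC
  set P : Matrix l l ℝ := M.submatrix (eR ∘ Sum.inl) (eC ∘ Sum.inl)
  have hN : N = fromBlocks P N.toBlocks₁₂ N.toBlocks₂₁ N.toBlocks₂₂ :=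
    (fromBlocks_toBlocks N).symm
  rcases eq_or_ne P.det 0 with hdet | hdet
  · rw [hdet, abs_zero, mul_zero]
    positivity
  have hPpos : 0 < |P.det| := abs_pos.2 hdet
  have hP : IsUnit P.det := hdet.isUnit
  have hS : ∀ p q, |(N.toBlocks₂₂ - N.toBlocks₂₁ * P⁻¹ * N.toBlocks₁₂) p q| ≤ V / |P.det| := by
    intro p q
    rw [le_div_iff₀ hPpos, ← abs_mul, schur_apply_mul_det hP, ← hN, submatrix_submatrix]
    exact hbord p q
  have hσ : singularValue M (Fintype.card l + 1) ^ 2 ≤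
      (√(Fintype.card m' * Fintype.card n') * (V / |P.det|)) ^ 2 := by
    rw [sq_singularValue, mul_pow, Real.sq_sqrt (by positivity)]
    exact (kthLargest_eigenvalues_le_frobeniusSq_schur M eR eC hN hP).trans
      (frobeniusSq_le_of_abs_le hS)
  have := (pow_le_pow_iff_left₀ (Real.sqrt_nonneg _) (by positivity) two_ne_zero).1 hσ
  rwa [mul_div_assoc', le_div_iff₀ hPpos] at this

end CrossApproximation

lemma abs_det_mul_abs_inv_apply {k : ℕ} {A : Matrix (Fin (k + 1)) (Fin (k + 1)) ℝ}
    (hA : IsUnit A.det) (i j : Fin (k + 1)) :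
    |A.det| * |A⁻¹ j i| = |(A.submatrix i.succAbove j.succAbove).det| := by
  rw [inv_def, Matrix.smul_apply, smul_eq_mul, adjugate_fin_succ_eq_det_submatrix, abs_mul, abs_mul,
    abs_pow, abs_neg, abs_one, one_pow, one_mul, Ring.inverse_eq_inv', abs_inv,
    mul_inv_cancel_left₀ (abs_ne_zero.2 hA.ne_zero)]

def succAboveSumEquiv {k : ℕ} (i : Fin (k + 1)) : Fin k ⊕ Unit ≃ Fin (k + 1) :=
  ((finSuccEquiv' i).trans (Equiv.optionEquivSumPUnit (Fin k))).symm

@[simp]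
lemma succAboveSumEquiv_inl {k : ℕ} (i : Fin (k + 1)) (a : Fin k) :
    succAboveSumEquiv i (Sum.inl a) = i.succAbove a := by
  simp [succAboveSumEquiv, Equiv.optionEquivSumPUnit]

@[simp]
lemma succAboveSumEquiv_inr {k : ℕ} (i : Fin (k + 1)) (u : Unit) :
    succAboveSumEquiv i (Sum.inr u) = i := by
  simp [succAboveSumEquiv, Equiv.optionEquivSumPUnit]

/-- Moves row (or column) `i` of the leading block into the trailing block. -/
def blockSuccAboveEquiv {k : ℕ} (m : Type*) (i : Fin (k + 1)) :
    Fin k ⊕ (Unit ⊕ m) ≃ Fin (k + 1) ⊕ m :=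
  (Equiv.sumAssoc _ _ _).symm.trans ((succAboveSumEquiv i).sumCongr (Equiv.refl m))

@[simp]
lemma blockSuccAboveEquiv_inl {k : ℕ} (m : Type*) (i : Fin (k + 1)) (a : Fin k) :
    blockSuccAboveEquiv m i (Sum.inl a) = Sum.inl (i.succAbove a) := by
  simp [blockSuccAboveEquiv]

@[simp]
lemma blockSuccAboveEquiv_inr_inl {k : ℕ} (m : Type*) (i : Fin (k + 1)) (u : Unit) :
    blockSuccAboveEquiv m i (Sum.inr (Sum.inl u)) = Sum.inl i := by
  simp [blockSuccAboveEquiv]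

@[simp]
lemma blockSuccAboveEquiv_inr_inr {k : ℕ} (m : Type*) (i : Fin (k + 1)) (p : m) :
    blockSuccAboveEquiv m i (Sum.inr (Sum.inr p)) = Sum.inr p := by
  simp [blockSuccAboveEquiv]

lemma abs_det_bordered_le_of_local_maxvol {k m₂ n₂ : ℕ}
    {A₁₁ : Matrix (Fin (k + 1)) (Fin (k + 1)) ℝ} {A₁₂ : Matrix (Fin (k + 1)) (Fin n₂) ℝ}
    {A₂₁ : Matrix (Fin m₂) (Fin (k + 1)) ℝ} {A₂₂ : Matrix (Fin m₂) (Fin n₂) ℝ} {ρ : ℝ}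
    (hρ : 1 ≤ ρ)
    (hcol : ∀ (q : Fin n₂) (j : Fin (k + 1)),
      |(A₁₁.updateCol j (fun i => A₁₂ i q)).det| ≤ ρ * |A₁₁.det|)
    (hrow : ∀ (p : Fin m₂) (i : Fin (k + 1)),
      |(A₁₁.updateRow i (fun j => A₂₁ p j)).det| ≤ ρ * |A₁₁.det|)
    (hloc : ∀ (p : Fin m₂) (q : Fin n₂) (r c : Fin (k + 1) → Fin (k + 1) ⊕ Unit),
      Function.Injective r → Function.Injective c →
      |((fromBlocks A₁₁ (of fun i (_ : Unit) => A₁₂ i q) (of fun (_ : Unit) j => A₂₁ p j)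
          (of fun (_ : Unit) (_ : Unit) => A₂₂ p q)).submatrix r c).det| ≤ ρ * |A₁₁.det|)
    (i j : Fin (k + 1)) (p : Unit ⊕ Fin m₂) (q : Unit ⊕ Fin n₂) :
    |((fromBlocks A₁₁ A₁₂ A₂₁ A₂₂).submatrix
      (blockSuccAboveEquiv (Fin m₂) i ∘ Sum.map id fun _ : Unit => p)
      (blockSuccAboveEquiv (Fin n₂) j ∘ Sum.map id fun _ : Unit => q)).det| ≤ ρ * |A₁₁.det| := by
  set eI := succAboveSumEquiv i
  set eJ := succAboveSumEquiv j
  -- `p = inl ()` keeps row `i` of `A₁₁`, `p = inr p'` brings in row `p'` of `A₂₁`; same for `q`.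
  rcases p with ⟨⟩ | p <;> rcases q with ⟨⟩ | q
  · calc _ = |(A₁₁.submatrix eI eJ).det| := by
          congr 2; ext (a | _) (b | _) <;> simp [eI, eJ]
      _ ≤ ρ * |A₁₁.det| := by
          rw [abs_det_submatrix_equiv_equiv]; exact le_mul_of_one_le_left (abs_nonneg _) hρ
  · calc _ = |((A₁₁.updateCol j fun r => A₁₂ r q).submatrix eI eJ).det| := by
          congr 2; ext (a | _) (b | _) <;> simp [eI, eJ, Fin.succAbove_ne]
      _ ≤ ρ * |A₁₁.det| := by rw [abs_det_submatrix_equiv_equiv]; exact hcol q j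
  · calc _ = |((A₁₁.updateRow i fun c => A₂₁ p c).submatrix eI eJ).det| := by
          congr 2; ext (a | _) (b | _) <;> simp [eI, eJ, updateRow_apply, Fin.succAbove_ne]
      _ ≤ ρ * |A₁₁.det| := by rw [abs_det_submatrix_equiv_equiv]; exact hrow p i
  · have hr := (Fin.succAbove_right_injective (p := i)).sumMap (Function.injective_id (α := Unit))
    have hc := (Fin.succAbove_right_injective (p := j)).sumMap (Function.injective_id (α := Unit))
    set X := fromBlocks A₁₁ (of fun r (_ : Unit) => A₁₂ r q) (of fun (_ : Unit) c => A₂₁ p c)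
      (of fun (_ : Unit) (_ : Unit) => A₂₂ p q)
    calc _ = |(X.submatrix (Sum.map i.succAbove id) (Sum.map j.succAbove id)).det| := by
          congr 2; ext (a | _) (b | _) <;> simp [X]
      _ = |((X.submatrix _ _).submatrix eI.symm eJ.symm).det| :=
          (abs_det_submatrix_equiv_equiv _ _ _).symm
      _ ≤ ρ * |A₁₁.det| := by
          rw [submatrix_submatrix]
          exact hloc p q _ _ (hr.comp eI.symm.injective) (hc.comp eJ.symm.injective)

lemma singularValue_mul_abs_inv_apply_le {k : ℕ} {m' n' : Type*} [Fintype m'] [Fintype n']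
    [DecidableEq n'] {A₁₁ : Matrix (Fin (k + 1)) (Fin (k + 1)) ℝ}
    {A₁₂ : Matrix (Fin (k + 1)) n' ℝ} {A₂₁ : Matrix m' (Fin (k + 1)) ℝ} {A₂₂ : Matrix m' n' ℝ}
    (hA : IsUnit A₁₁.det) {ρ : ℝ} (hρ : 0 ≤ ρ) {i j : Fin (k + 1)}
    (hbord : ∀ p q, |((fromBlocks A₁₁ A₁₂ A₂₁ A₂₂).submatrix
      (blockSuccAboveEquiv m' i ∘ Sum.map id fun _ : Unit => p)
      (blockSuccAboveEquiv n' j ∘ Sum.map id fun _ : Unit => q)).det| ≤ ρ * |A₁₁.det|) :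
    singularValue (fromBlocks A₁₁ A₁₂ A₂₁ A₂₂) (k + 1) * |A₁₁⁻¹ j i| ≤
      ρ * √((Fintype.card m' + 1) * (Fintype.card n' + 1)) := by
  have hdet : 0 < |A₁₁.det| := abs_pos.2 hA.ne_zero
  have h := singularValue_mul_abs_det_le_of_abs_det_bordered_le _ _ _ (by positivity) hbord
  have hminor : (fromBlocks A₁₁ A₁₂ A₂₁ A₂₂).submatrix
      (blockSuccAboveEquiv m' i ∘ Sum.inl) (blockSuccAboveEquiv n' j ∘ Sum.inl) =
      A₁₁.submatrix i.succAbove j.succAbove := by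
    ext a b
    simp
  rw [hminor, ← abs_det_mul_abs_inv_apply hA, Fintype.card_fin] at h
  refine le_of_mul_le_mul_right ?_ hdet
  calc _ = singularValue (fromBlocks A₁₁ A₁₂ A₂₁ A₂₂) (k + 1) * (|A₁₁.det| * |A₁₁⁻¹ j i|) := by
        ring
    _ ≤ _ := h
    _ = _ := by simp only [Fintype.card_sum, Fintype.card_unit, add_comm 1]; push_cast; ring

/-- Let `A = [[A₁₁, A₁₂], [A₂₁, A₂₂]]` be an `m × n` real matrix whose leading `k × k` block
`A₁₁` is nonsingular and has local `ρ`-maximum volume in `A` for some `ρ ≥ 1`: exchanging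
one column of `A₁₁` with a column of `A₁₂`, one row of `A₁₁` with a row of `A₂₁`, or one
row and one column simultaneously (equivalently, `A₁₁` has global `ρ`-maximum volume in
every `(k+1) × (k+1)` submatrix of `A` containing it) cannot increase the volume of `A₁₁`
by more than the factor `ρ`.  Then `σ_k(A) ≤ ρ k √((m−k+1)(n−k+1)) σ_k(A₁₁)`. -/
theorem sigma_le_of_local_maxvol {k m₂ n₂ : ℕ}
    (A₁₁ : Matrix (Fin k) (Fin k) ℝ) (A₁₂ : Matrix (Fin k) (Fin n₂) ℝ)
    (A₂₁ : Matrix (Fin m₂) (Fin k) ℝ) (A₂₂ : Matrix (Fin m₂) (Fin n₂) ℝ)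
    (hA : IsUnit A₁₁.det) (ρ : ℝ) (hρ : 1 ≤ ρ)
    (hcol : ∀ (q : Fin n₂) (j : Fin k),
      |(A₁₁.updateCol j (fun i => A₁₂ i q)).det| ≤ ρ * |A₁₁.det|)
    (hrow : ∀ (p : Fin m₂) (i : Fin k),
      |(A₁₁.updateRow i (fun j => A₂₁ p j)).det| ≤ ρ * |A₁₁.det|)
    (hloc : ∀ (p : Fin m₂) (q : Fin n₂) (r c : Fin k → Fin k ⊕ Unit),
      Function.Injective r → Function.Injective c →
      |((Matrix.fromBlocks A₁₁ (Matrix.of fun i (_ : Unit) => A₁₂ i q)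
          (Matrix.of fun (_ : Unit) j => A₂₁ p j)
          (Matrix.of fun (_ : Unit) (_ : Unit) => A₂₂ p q)).submatrix r c).det|
        ≤ ρ * |A₁₁.det|) :
    singularValue (Matrix.fromBlocks A₁₁ A₁₂ A₂₁ A₂₂) k ≤
      ρ * k * Real.sqrt (((m₂ : ℝ) + 1) * ((n₂ : ℝ) + 1)) * singularValue A₁₁ k := by
  rcases k with _ | k
  · simp [singularValue, kthLargest_zero]
  have h := le_mul_singularValue_of_mul_abs_inv_apply_le hA
    (σ := singularValue (fromBlocks A₁₁ A₁₂ A₂₁ A₂₂) (k + 1)) (Real.sqrt_nonneg _) fun j i =>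
      singularValue_mul_abs_inv_apply_le hA (by linarith)
        (abs_det_bordered_le_of_local_maxvol hρ hcol hrow hloc i j)
  simp only [Fintype.card_fin] at h
  push_cast at h ⊢
  linarith
end
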